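/- arXiv:1209.4938 — 4 statements merged into one kernel-verified Lean document; each statement's English description precedes it below -/
import Mathlib

section
/- Let $F$ be a nonzero multihomogeneous polynomial of multidegree $(d_1,\ldots,d_m)$ in groups of variables $X_1,\ldots,X_m$ (group $X_i$ having $n_i+1$ variables). Then the number $N_a$ of zeros of $F$ in $\mathbb{F}_q^{n_1+1} \times \cdots \times \mathbb{F}_q^{n_m+1}$ satisfies $N_a \le q^{n_1+1} \cdots q^{n_m+1} - q^{n_1+\cdots+n_m}\prod_{i=1}^m(q-d_i) = \sum_{\varepsilon \in \{0,1\}^m \setminus \{0\}} (-1)^{|\varepsilon|+1} \prod_{i=1}^m d_i^{\varepsilon_i} q^{n_i+1-\varepsilon_i}$, provided $d_i < q$ for all $i$. -/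
open MvPolynomial

variable {Fq K : Type} [Field Fq] [Fintype Fq] [Field K]

lemma card_cons_sum {k : ℕ} (P : (Fin (k+1) → Fq) → Prop) :
    Nat.card {x : Fin (k+1) → Fq // P x}
      = ∑ s : Fin k → Fq, Nat.card {a : Fq // P (Fin.cons a s)} := by
  classical
  have e : {x : Fin (k+1) → Fq // P x}
      ≃ Σ s : Fin k → Fq, {a : Fq // P (Fin.cons a s)} := by
    refine (Equiv.subtypeEquiv
      (((Fin.consEquiv (fun _ => Fq)).symm).trans (Equiv.prodComm _ _)) ?_).trans
      (Equiv.subtypeProdEquivSigmaSubtype (fun s a => P (Fin.cons a s)))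
    intro x
    simp [Fin.consEquiv, Fin.cons_self_tail]
  rw [Nat.card_congr e, Nat.card_eq_fintype_card, Fintype.card_sigma]
  exact Finset.sum_congr rfl fun s _ => (Nat.card_eq_fintype_card).symm

lemma card_roots_le (φ : Fq →+* K) (p : Polynomial K) (hp : p ≠ 0) :
    Nat.card {a : Fq // Polynomial.eval (φ a) p = 0} ≤ p.natDegree := by
  classical
  calc Nat.card {a : Fq // Polynomial.eval (φ a) p = 0}
      ≤ Nat.card {r : K // r ∈ p.roots.toFinset} := by
        refine Nat.card_le_card_of_injective
          (fun a => ⟨φ a.1, by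
            rcases a with ⟨a, ha⟩
            simp [Multiset.mem_toFinset, Polynomial.mem_roots hp, Polynomial.IsRoot, ha]⟩) ?_
        intro a b hab
        exact Subtype.ext (φ.injective (congrArg Subtype.val hab))
    _ = p.roots.toFinset.card := Nat.card_eq_finsetCard _
    _ ≤ Multiset.card p.roots := Multiset.toFinset_card_le _
    _ ≤ p.natDegree := Polynomial.card_roots' p

lemma subtype_card_le_q (P : Fq → Prop) : Nat.card {a : Fq // P a} ≤ Fintype.card Fq := by
  classical
  exact (Nat.card_le_card_of_injective Subtype.val Subtype.val_injective).trans
    (le_of_eq Nat.card_eq_fintype_card)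

lemma schwartz_zippel (φ : Fq →+* K) :
    ∀ (k : ℕ) (F : MvPolynomial (Fin k) K), F ≠ 0 →
    Fintype.card Fq * Nat.card {x : Fin k → Fq // eval (φ ∘ x) F = 0}
      ≤ F.totalDegree * (Fintype.card Fq) ^ k := by
  intro k
  induction k with
  | zero =>
    intro F hF
    obtain ⟨c, rfl⟩ := MvPolynomial.C_surjective (Fin 0) F
    have hc : c ≠ 0 := fun h => hF (by rw [h, map_zero])
    haveI : IsEmpty {x : Fin 0 → Fq // eval (φ ∘ x) (C c) = 0} := by
      refine ⟨fun ⟨x, hx⟩ => hc ?_⟩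
      simpa using hx
    simp only [Nat.card_of_isEmpty, mul_zero]
    exact Nat.zero_le _
  | succ k ih =>
    intro F hF
    classical
    set P := finSuccEquiv K k F with hP
    have hPne : P ≠ 0 := by
      simp [hP, AddEquivClass.map_ne_zero_iff, hF]
    set t := P.natDegree with ht
    set c := P.coeff t with hc
    have hcne : c ≠ 0 := Polynomial.leadingCoeff_ne_zero.mpr hPne
    have hkey : ∀ s : Fin k → Fq,
        Nat.card {a : Fq // eval (φ ∘ Fin.cons a s) F = 0}
          ≤ if eval (φ ∘ s) c = 0 then Fintype.card Fq else t := by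
      intro s
      by_cases hs : eval (φ ∘ s) c = 0
      · simpa [hs] using subtype_card_le_q (fun a => eval (φ ∘ Fin.cons a s) F = 0)
      · simp only [hs, if_false]
        have heq : ∀ a : Fq, eval (φ ∘ Fin.cons a s) F
            = Polynomial.eval (φ a) (Polynomial.map (eval (φ ∘ s)) P) := by
          intro a
          rw [Fin.comp_cons, eval_eq_eval_mv_eval']
        have hps : Polynomial.map (eval (φ ∘ s)) P ≠ 0 := by
          intro h0
          apply hs
          have := Polynomial.coeff_map (p := P) (eval (φ ∘ s)) t
          rw [h0] at this
          simpa [hc] using this.symm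
        have hnd : (Polynomial.map (eval (φ ∘ s)) P).natDegree ≤ t :=
          Polynomial.natDegree_map_le
        calc Nat.card {a : Fq // eval (φ ∘ Fin.cons a s) F = 0}
            = Nat.card {a : Fq // Polynomial.eval (φ a) (Polynomial.map (eval (φ ∘ s)) P) = 0} := by
              apply Nat.card_congr
              exact Equiv.subtypeEquiv (Equiv.refl _) (fun a => by simp [heq a])
          _ ≤ (Polynomial.map (eval (φ ∘ s)) P).natDegree := card_roots_le φ _ hps
          _ ≤ t := hnd
    have hsum : Nat.card {x : Fin (k+1) → Fq // eval (φ ∘ x) F = 0}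
        ≤ Fintype.card Fq * Nat.card {s : Fin k → Fq // eval (φ ∘ s) c = 0}
          + t * Fintype.card Fq ^ k := by
      rw [card_cons_sum (fun x => eval (φ ∘ x) F = 0)]
      calc ∑ s : Fin k → Fq, Nat.card {a : Fq // eval (φ ∘ Fin.cons a s) F = 0}
          ≤ ∑ s : Fin k → Fq, (if eval (φ ∘ s) c = 0 then Fintype.card Fq else t) :=
            Finset.sum_le_sum fun s _ => hkey s
        _ = Fintype.card Fq * Nat.card {s : Fin k → Fq // eval (φ ∘ s) c = 0}
            + t * (Finset.univ.filter fun s : Fin k → Fq => ¬ eval (φ ∘ s) c = 0).card := by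
            rw [Finset.sum_ite, Finset.sum_const, Finset.sum_const, smul_eq_mul, smul_eq_mul,
              Nat.card_eq_fintype_card, Fintype.card_subtype]
            ring
        _ ≤ Fintype.card Fq * Nat.card {s : Fin k → Fq // eval (φ ∘ s) c = 0}
            + t * Fintype.card Fq ^ k := by
            gcongr
            calc (Finset.univ.filter fun s : Fin k → Fq => ¬ eval (φ ∘ s) c = 0).card
                ≤ (Finset.univ : Finset (Fin k → Fq)).card := Finset.card_filter_le _ _
              _ = Fintype.card Fq ^ k := by simp [Finset.card_univ]
    have hdeg : c.totalDegree + t ≤ F.totalDegree :=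
      totalDegree_coeff_finSuccEquiv_add_le F t hcne
    calc Fintype.card Fq * Nat.card {x : Fin (k+1) → Fq // eval (φ ∘ x) F = 0}
        ≤ Fintype.card Fq * (Fintype.card Fq * Nat.card {s : Fin k → Fq // eval (φ ∘ s) c = 0}
            + t * Fintype.card Fq ^ k) := Nat.mul_le_mul_left _ hsum
      _ = Fintype.card Fq * (Fintype.card Fq * Nat.card {s : Fin k → Fq // eval (φ ∘ s) c = 0})
            + t * Fintype.card Fq ^ (k+1) := by ring
      _ ≤ Fintype.card Fq * (c.totalDegree * Fintype.card Fq ^ k)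
            + t * Fintype.card Fq ^ (k+1) :=
            Nat.add_le_add_right (Nat.mul_le_mul_left _ (ih c hcne)) _
      _ = (c.totalDegree + t) * Fintype.card Fq ^ (k+1) := by ring
      _ ≤ F.totalDegree * Fintype.card Fq ^ (k+1) := Nat.mul_le_mul_right _ hdeg

open MvPolynomial

variable {Fq K : Type} [Field Fq] [Fintype Fq] [Field K]

section Spec
variable {σ τ : Type} [Fintype σ] [Fintype τ] [DecidableEq σ] [DecidableEq τ]

/-- Specialization of the `τ`-variables. -/
noncomputable def spec (s : τ → K) (G : MvPolynomial (σ ⊕ τ) K) : MvPolynomial σ K :=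
  aeval (Sum.elim X (fun j => C (s j))) G

lemma eval_spec (x : σ → K) (s : τ → K) (G : MvPolynomial (σ ⊕ τ) K) :
    eval x (spec s G) = eval (Sum.elim x s) G := by
  induction G using MvPolynomial.induction_on with
  | C a => simp [spec]
  | add p q hp hq => simp [spec, map_add] at hp hq ⊢; rw [hp, hq]
  | mul_X p i hp =>
    cases i <;> simp [spec, map_mul] at hp ⊢ <;> rw [hp] <;> left <;> rfl

/-- image of a monomial under specialization -/
lemma spec_monomial (s : τ → K) (ν : σ ⊕ τ →₀ ℕ) (r : K) :
    spec s (monomial ν r)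
      = monomial ((Finsupp.sumFinsuppEquivProdFinsupp ν).1)
          (r * ∏ j : τ, s j ^ ν (Sum.inr j)) := by
  classical
  rw [spec, aeval_monomial]
  have hprod : (ν.prod fun v k => (Sum.elim X (fun j => C (s j)) v) ^ k)
      = (∏ b : σ, (X b : MvPolynomial σ K) ^ ν (Sum.inl b))
        * ∏ j : τ, (C (s j) : MvPolynomial σ K) ^ ν (Sum.inr j) := by
    rw [Finsupp.prod_fintype _ _ (fun v => pow_zero _)]
    rw [Fintype.prod_sum_type]
    simp
  rw [hprod]
  have hmon : (∏ b : σ, (X b : MvPolynomial σ K) ^ ν (Sum.inl b))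
      = monomial ((Finsupp.sumFinsuppEquivProdFinsupp ν).1) 1 := by
    rw [monomial_eq, Finsupp.prod_fintype _ _ (fun v => pow_zero _)]
    simp [Finsupp.fst_sumFinsuppEquivProdFinsupp]
  have hC : (∏ j : τ, (C (s j) : MvPolynomial σ K) ^ ν (Sum.inr j))
      = C (∏ j : τ, s j ^ ν (Sum.inr j)) := by
    rw [map_prod]; simp [map_pow]
  rw [hmon, hC]
  rw [algebraMap_eq, mul_comm (monomial _ 1) (C _), ← mul_assoc, ← C_mul, C_mul_monomial, mul_one]

lemma spec_eq_sum (s : τ → K) (G : MvPolynomial (σ ⊕ τ) K) :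
    spec s G = ∑ ν ∈ G.support,
      monomial ((Finsupp.sumFinsuppEquivProdFinsupp ν).1)
        (coeff ν G * ∏ j : τ, s j ^ ν (Sum.inr j)) := by
  calc spec s G = spec s (∑ ν ∈ G.support, monomial ν (coeff ν G)) := by
        rw [support_sum_monomial_coeff]
    _ = ∑ ν ∈ G.support, spec s (monomial ν (coeff ν G)) := by
        unfold spec; rw [map_sum]
    _ = _ := Finset.sum_congr rfl fun ν _ => spec_monomial s ν _

lemma totalDegree_spec_le (s : τ → K) (G : MvPolynomial (σ ⊕ τ) K) (D : ℕ)
    (hG : ∀ ν ∈ G.support, (∑ b : σ, ν (Sum.inl b)) ≤ D) :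
    (spec s G).totalDegree ≤ D := by
  rw [spec_eq_sum]
  refine (totalDegree_finset_sum _ _).trans (Finset.sup_le fun ν hν => ?_)
  by_cases hr : (coeff ν G * ∏ j : τ, s j ^ ν (Sum.inr j)) = 0
  · simp [hr]
  · rw [totalDegree_monomial _ hr]
    rw [Finsupp.sum_fintype _ _ (fun _ => rfl)]
    calc (∑ b : σ, (Finsupp.sumFinsuppEquivProdFinsupp ν).1 b)
        = ∑ b : σ, ν (Sum.inl b) := by
          simp [Finsupp.fst_sumFinsuppEquivProdFinsupp]
      _ ≤ D := hG ν hν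

noncomputable def mslice (b : σ →₀ ℕ) (G : MvPolynomial (σ ⊕ τ) K) : MvPolynomial τ K :=
  ∑ ν ∈ G.support.filter (fun ν => (Finsupp.sumFinsuppEquivProdFinsupp ν).1 = b),
    monomial ((Finsupp.sumFinsuppEquivProdFinsupp ν).2) (coeff ν G)

lemma coeff_spec (s : τ → K) (G : MvPolynomial (σ ⊕ τ) K) (b : σ →₀ ℕ) :
    coeff b (spec s G) = eval s (mslice b G) := by
  rw [spec_eq_sum, MvPolynomial.coeff_sum]
  rw [mslice, map_sum, Finset.sum_filter]
  refine Finset.sum_congr rfl fun ν _ => ?_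
  rw [coeff_monomial]
  by_cases hb : (Finsupp.sumFinsuppEquivProdFinsupp ν).1 = b
  · rw [if_pos hb, if_pos hb, eval_monomial]
    rw [Finsupp.prod_fintype _ _ (fun _ => pow_zero _)]
    simp [Finsupp.snd_sumFinsuppEquivProdFinsupp]
  · rw [if_neg hb, if_neg hb]

lemma support_mslice_subset (b : σ →₀ ℕ) (G : MvPolynomial (σ ⊕ τ) K) :
    (mslice b G).support ⊆
      G.support.image (fun ν => (Finsupp.sumFinsuppEquivProdFinsupp ν).2) := by
  classical
  refine MvPolynomial.support_sum.trans ?_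
  intro a ha
  rw [Finset.mem_biUnion] at ha
  obtain ⟨ν, hν, ha⟩ := ha
  rw [Finset.mem_filter] at hν
  rw [MvPolynomial.support_monomial] at ha
  by_cases hc : coeff ν G = 0
  · rw [if_pos hc] at ha; exact absurd ha (Finset.notMem_empty a)
  · rw [if_neg hc, Finset.mem_singleton] at ha
    exact Finset.mem_image.mpr ⟨ν, hν.1, ha.symm⟩

lemma mslice_ne_zero (G : MvPolynomial (σ ⊕ τ) K) (μ : σ ⊕ τ →₀ ℕ) (hμ : μ ∈ G.support) :
    mslice (Finsupp.sumFinsuppEquivProdFinsupp μ).1 G ≠ 0 := by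
  have hcoeff : coeff ((Finsupp.sumFinsuppEquivProdFinsupp μ).2)
      (mslice (Finsupp.sumFinsuppEquivProdFinsupp μ).1 G) = coeff μ G := by
    rw [mslice, MvPolynomial.coeff_sum]
    have h1 : ∀ ν ∈ G.support.filter
        (fun ν => (Finsupp.sumFinsuppEquivProdFinsupp ν).1
          = (Finsupp.sumFinsuppEquivProdFinsupp μ).1), ν ≠ μ →
        coeff ((Finsupp.sumFinsuppEquivProdFinsupp μ).2)
          (monomial ((Finsupp.sumFinsuppEquivProdFinsupp ν).2) (coeff ν G)) = 0 := by
      intro ν hν hne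
      rw [Finset.mem_filter] at hν
      rw [coeff_monomial]
      refine if_neg fun h2 => hne ?_
      have : Finsupp.sumFinsuppEquivProdFinsupp ν = Finsupp.sumFinsuppEquivProdFinsupp μ :=
        Prod.ext hν.2 h2
      exact Finsupp.sumFinsuppEquivProdFinsupp.injective this
    have hmem : μ ∈ G.support.filter
        (fun ν => (Finsupp.sumFinsuppEquivProdFinsupp ν).1
          = (Finsupp.sumFinsuppEquivProdFinsupp μ).1) :=
      Finset.mem_filter.mpr ⟨hμ, rfl⟩
    rw [Finset.sum_eq_single_of_mem μ hmem h1, coeff_monomial, if_pos rfl]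
  intro h0
  rw [h0] at hcoeff
  exact (mem_support_iff.mp hμ) (by simpa using hcoeff.symm)

end Spec

open MvPolynomial

section Helpers
variable {Fq : Type} [Fintype Fq]

lemma card_sum_split {σ τ : Type} [Fintype σ] [Fintype τ] [DecidableEq τ] (P : (σ ⊕ τ → Fq) → Prop) :
    Nat.card {x : σ ⊕ τ → Fq // P x}
      = ∑ s : τ → Fq, Nat.card {z : σ → Fq // P (Sum.elim z s)} := by
  classical
  have e : {x : σ ⊕ τ → Fq // P x} ≃ Σ s : τ → Fq, {z : σ → Fq // P (Sum.elim z s)} := by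
    refine (Equiv.subtypeEquiv
      ((Equiv.sumArrowEquivProdArrow σ τ Fq).trans (Equiv.prodComm _ _)) ?_).trans
      (Equiv.subtypeProdEquivSigmaSubtype (fun s z => P (Sum.elim z s)))
    intro x
    simp [Equiv.sumArrowEquivProdArrow, Sum.elim_comp_inl_inr]
  rw [Nat.card_congr e, Nat.card_eq_fintype_card, Fintype.card_sigma]
  exact Finset.sum_congr rfl fun s _ => (Nat.card_eq_fintype_card).symm

lemma card_compl {α : Type} [Fintype α] (P : α → Prop) :
    Nat.card {a // P a} + Nat.card {a // ¬ P a} = Fintype.card α := by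
  classical
  rw [Nat.card_eq_fintype_card, Nat.card_eq_fintype_card, Fintype.card_subtype,
    Fintype.card_subtype]
  rw [← Finset.card_univ]
  exact Finset.card_filter_add_card_filter_not ..

end Helpers

def sigmaSuccEquiv (m : ℕ) (c : Fin (m+1) → ℕ) :
    (Σ i : Fin (m+1), Fin (c i)) ≃ (Fin (c 0) ⊕ Σ i : Fin m, Fin (c i.succ)) where
  toFun x := Fin.cases (motive := fun i => Fin (c i) → (Fin (c 0) ⊕ Σ i : Fin m, Fin (c i.succ)))
    (fun j => Sum.inl j) (fun i j => Sum.inr ⟨i, j⟩) x.1 x.2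
  invFun y := Sum.elim (fun j => (⟨0, j⟩ : Σ i : Fin (m+1), Fin (c i)))
    (fun p => ⟨p.1.succ, p.2⟩) y
  left_inv := by
    rintro ⟨i, j⟩
    induction i using Fin.cases <;> simp
  right_inv := by
    rintro (j | ⟨i, j⟩) <;> simp

@[simp] lemma sigmaSuccEquiv_zero (m : ℕ) (c : Fin (m+1) → ℕ) (j : Fin (c 0)) :
    sigmaSuccEquiv m c ⟨0, j⟩ = Sum.inl j := by
  simp [sigmaSuccEquiv]

@[simp] lemma sigmaSuccEquiv_succ (m : ℕ) (c : Fin (m+1) → ℕ) (i : Fin m)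
    (j : Fin (c i.succ)) :
    sigmaSuccEquiv m c ⟨i.succ, j⟩ = Sum.inr ⟨i, j⟩ := by
  simp [sigmaSuccEquiv]

lemma multi_bound (φ : Fq →+* K) :
    ∀ (m : ℕ) (k dd : Fin m → ℕ) (F : MvPolynomial (Σ i : Fin m, Fin (k i + 1)) K),
    F ≠ 0 →
    (∀ mon ∈ F.support, ∀ i, (∑ j : Fin (k i + 1), mon ⟨i, j⟩) ≤ dd i) →
    (∏ i, (Fintype.card Fq - dd i) * Fintype.card Fq ^ (k i))
      ≤ Nat.card {x : (Σ i : Fin m, Fin (k i + 1)) → Fq // eval (φ ∘ x) F ≠ 0} := by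
  intro m
  induction m with
  | zero =>
    intro k dd F hF _
    haveI : IsEmpty (Σ i : Fin 0, Fin (k i + 1)) := ⟨fun v => Fin.elim0 v.1⟩
    obtain ⟨c, rfl⟩ := C_surjective _ F
    have hc : c ≠ 0 := fun h => hF (by rw [h, map_zero])
    haveI : Nonempty {x : (Σ i : Fin 0, Fin (k i + 1)) → Fq // eval (φ ∘ x) (C c) ≠ 0} :=
      ⟨⟨fun v => isEmptyElim v, by simpa using hc⟩⟩
    have h1 : 0 < Nat.card {x : (Σ i : Fin 0, Fin (k i + 1)) → Fq // eval (φ ∘ x) (C c) ≠ 0} :=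
      Nat.card_pos
    simpa [Nat.one_le_iff_ne_zero, Nat.pos_iff_ne_zero] using h1
  | succ m ih =>
    intro k dd F hF hdeg
    classical
    set q := Fintype.card Fq with hqdef
    have hq0 : 0 < q := Fintype.card_pos
    set σ' := Fin (k 0 + 1)
    set τ' := (Σ i : Fin m, Fin (k i.succ + 1)) with hτ'
    set e := sigmaSuccEquiv m (fun i => k i + 1) with he
    set G := rename e F with hGdef
    have hG : G ≠ 0 := fun h => hF (by
      have := rename_injective (R := K) e e.injective
      exact this (by simpa using h))
    -- support facts
    have hsupp : ∀ ν ∈ G.support, ∃ mon ∈ F.support,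
        (∀ j : σ', ν (Sum.inl j) = mon ⟨0, j⟩)
        ∧ (∀ i : Fin m, ∀ j : Fin (k i.succ + 1), ν (Sum.inr ⟨i, j⟩) = mon ⟨i.succ, j⟩) := by
      intro ν hν
      rw [hGdef, support_rename_of_injective e.injective, Finset.mem_image] at hν
      obtain ⟨mon, hmon, rfl⟩ := hν
      refine ⟨mon, hmon, fun j => ?_, fun i j => ?_⟩
      · have h : Sum.inl j = e ⟨0, j⟩ := by simp [he]
        rw [h, Finsupp.mapDomain_apply e.injective]
      · have h : Sum.inr ⟨i, j⟩ = e ⟨i.succ, j⟩ := by simp [he]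
        rw [h, Finsupp.mapDomain_apply e.injective]
    have hb0 : ∀ ν ∈ G.support, (∑ b : σ', ν (Sum.inl b)) ≤ dd 0 := by
      intro ν hν
      obtain ⟨mon, hmon, h1, _⟩ := hsupp ν hν
      calc (∑ b : σ', ν (Sum.inl b)) = ∑ j : σ', mon ⟨0, j⟩ :=
            Finset.sum_congr rfl fun j _ => h1 j
        _ ≤ dd 0 := hdeg mon hmon 0
    have hbi : ∀ ν ∈ G.support, ∀ i : Fin m,
        (∑ j : Fin (k i.succ + 1), ν (Sum.inr ⟨i, j⟩)) ≤ dd i.succ := by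
      intro ν hν i
      obtain ⟨mon, hmon, _, h2⟩ := hsupp ν hν
      calc (∑ j : Fin (k i.succ + 1), ν (Sum.inr ⟨i, j⟩))
          = ∑ j : Fin (k i.succ + 1), mon ⟨i.succ, j⟩ :=
            Finset.sum_congr rfl fun j _ => h2 i j
        _ ≤ dd i.succ := hdeg mon hmon i.succ
    -- transfer the count
    have hcount : Nat.card {x : (Σ i : Fin (m+1), Fin (k i + 1)) → Fq // eval (φ ∘ x) F ≠ 0}
        = Nat.card {y : σ' ⊕ τ' → Fq // eval (φ ∘ y) G ≠ 0} := by
      apply Nat.card_congr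
      refine Equiv.subtypeEquiv (Equiv.arrowCongr e (Equiv.refl Fq)) fun x => ?_
      have hx : eval (φ ∘ ((Equiv.arrowCongr e (Equiv.refl Fq)) x)) G = eval (φ ∘ x) F := by
        rw [hGdef, eval_rename]
        have hfun : (φ ∘ ((Equiv.arrowCongr e (Equiv.refl Fq)) x)) ∘ e = φ ∘ x := by
          funext v
          simp [Equiv.arrowCongr]
        rw [hfun]
      rw [hx]
    rw [hcount, card_sum_split (fun y => eval (φ ∘ y) G ≠ 0)]
    -- witness slice
    obtain ⟨μ, hμ⟩ := (support_nonempty (p := G)).mpr hG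
    set b := (Finsupp.sumFinsuppEquivProdFinsupp μ).1 with hb
    set c := mslice b G with hcdef
    have hcne : c ≠ 0 := mslice_ne_zero G μ hμ
    have hcsupp : ∀ a ∈ c.support, ∀ i : Fin m,
        (∑ j : Fin (k i.succ + 1), a ⟨i, j⟩) ≤ dd i.succ := by
      intro a ha i
      obtain ⟨ν, hν, rfl⟩ := Finset.mem_image.mp (support_mslice_subset b G ha)
      calc (∑ j : Fin (k i.succ + 1), (Finsupp.sumFinsuppEquivProdFinsupp ν).2 ⟨i, j⟩)
          = ∑ j : Fin (k i.succ + 1), ν (Sum.inr ⟨i, j⟩) := by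
            refine Finset.sum_congr rfl fun j _ => ?_
            rw [Finsupp.snd_sumFinsuppEquivProdFinsupp]
        _ ≤ dd i.succ := hbi ν hν i
    -- per-good-s bound
    have hgood : ∀ s : τ' → Fq, eval (φ ∘ s) c ≠ 0 →
        (q - dd 0) * q ^ (k 0)
          ≤ Nat.card {z : σ' → Fq // eval (φ ∘ Sum.elim z s) G ≠ 0} := by
      intro s hs
      have hiff : ∀ z : σ' → Fq, eval (φ ∘ Sum.elim z s) G = eval (φ ∘ z) (spec (φ ∘ s) G) := by
        intro z
        rw [eval_spec]
        have hfun : φ ∘ Sum.elim z s = Sum.elim (φ ∘ z) (φ ∘ s) := by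
          funext v
          cases v <;> rfl
        rw [hfun]
      set Gs := spec (φ ∘ s) G with hGs
      have hGsne : Gs ≠ 0 := by
        intro h0
        apply hs
        have h1 := coeff_spec (φ ∘ s) G b
        rw [← hGs, h0] at h1
        rw [← hcdef] at h1
        simpa using h1.symm
      have htd : Gs.totalDegree ≤ dd 0 := totalDegree_spec_le _ _ _ hb0
      have hsz : q * Nat.card {z : σ' → Fq // eval (φ ∘ z) Gs = 0}
          ≤ dd 0 * q ^ (k 0 + 1) :=
        (schwartz_zippel φ (k 0 + 1) Gs hGsne).trans
          (Nat.mul_le_mul_right _ htd)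
      have hZ : Nat.card {z : σ' → Fq // eval (φ ∘ z) Gs = 0} ≤ dd 0 * q ^ (k 0) := by
        refine Nat.le_of_mul_le_mul_left ?_ hq0
        calc q * Nat.card {z : σ' → Fq // eval (φ ∘ z) Gs = 0} ≤ dd 0 * q ^ (k 0 + 1) := hsz
          _ = q * (dd 0 * q ^ (k 0)) := by ring
      have hcompl := card_compl (fun z : σ' → Fq => eval (φ ∘ z) Gs = 0)
      have hcardfun : Fintype.card (σ' → Fq) = q ^ (k 0 + 1) := by
        rw [Fintype.card_fun, show Fintype.card σ' = k 0 + 1 from Fintype.card_fin _]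
      rw [hcardfun] at hcompl
      have heqcard : Nat.card {z : σ' → Fq // eval (φ ∘ Sum.elim z s) G ≠ 0}
          = Nat.card {z : σ' → Fq // ¬ eval (φ ∘ z) Gs = 0} := by
        apply Nat.card_congr
        refine Equiv.subtypeEquiv (Equiv.refl _) fun z => ?_
        rw [hiff z]
        exact Iff.rfl
      rw [heqcard]
      by_cases hdq : dd 0 ≤ q
      · have hsub : (q - dd 0) * q ^ (k 0) + dd 0 * q ^ (k 0) ≤ q ^ (k 0 + 1) := by
          rw [← add_mul]
          calc (q - dd 0 + dd 0) * q ^ (k 0) ≤ q * q ^ (k 0) := by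
                refine Nat.mul_le_mul_right _ ?_
                omega
            _ = q ^ (k 0 + 1) := by rw [pow_succ, mul_comm]
        refine le_trans (Nat.le_sub_of_add_le hsub) ?_
        refine le_trans (Nat.sub_le_sub_left hZ _) ?_
        exact le_of_eq (by rw [← hcompl, Nat.add_sub_cancel_left])
      · rw [Nat.sub_eq_zero_of_le (le_of_not_ge hdq), zero_mul]
        exact Nat.zero_le _
    -- assemble
    have hIH := ih (fun i => k i.succ) (fun i => dd i.succ) c hcne hcsupp
    calc ∏ i : Fin (m+1), (q - dd i) * q ^ (k i)
        = ((q - dd 0) * q ^ (k 0)) * ∏ i : Fin m, (q - dd i.succ) * q ^ (k i.succ) :=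
          Fin.prod_univ_succ _
      _ ≤ ((q - dd 0) * q ^ (k 0))
            * Nat.card {s : τ' → Fq // eval (φ ∘ s) c ≠ 0} :=
          Nat.mul_le_mul_left _ hIH
      _ ≤ ∑ s : τ' → Fq, Nat.card {z : σ' → Fq // eval (φ ∘ Sum.elim z s) G ≠ 0} := by
          rw [Nat.card_eq_fintype_card, Fintype.card_subtype]
          calc ((q - dd 0) * q ^ (k 0))
                * (Finset.univ.filter fun s : τ' → Fq => eval (φ ∘ s) c ≠ 0).card
              = ∑ s ∈ Finset.univ.filter (fun s : τ' → Fq => eval (φ ∘ s) c ≠ 0),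
                  (q - dd 0) * q ^ (k 0) := by rw [Finset.sum_const, smul_eq_mul, mul_comm]
            _ ≤ ∑ s ∈ Finset.univ.filter (fun s : τ' → Fq => eval (φ ∘ s) c ≠ 0),
                  Nat.card {z : σ' → Fq // eval (φ ∘ Sum.elim z s) G ≠ 0} :=
                Finset.sum_le_sum fun s hsmem =>
                  hgood s (Finset.mem_filter.mp hsmem).2
            _ ≤ ∑ s : τ' → Fq, Nat.card {z : σ' → Fq // eval (φ ∘ Sum.elim z s) G ≠ 0} :=
                Finset.sum_le_sum_of_subset (Finset.filter_subset _ _)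

lemma hexp_bool : ∀ (m : ℕ) (A B : Fin m → ℤ),
    (∏ i, (A i - B i))
      = ∑ ε : Fin m → Bool,
          (-1 : ℤ) ^ (∑ i, if ε i then 1 else 0 : ℕ) * ∏ i, (if ε i then B i else A i) := by
  intro m
  induction m with
  | zero => intro A B; simp
  | succ m ih =>
    intro A B
    have hre : (∑ ε : Fin (m+1) → Bool,
          (-1 : ℤ) ^ (∑ i, if ε i then 1 else 0 : ℕ) * ∏ i, (if ε i then B i else A i))
        = ∑ p : Bool × (Fin m → Bool),
          (-1 : ℤ) ^ (∑ i, if (Fin.cons p.1 p.2 : Fin (m+1) → Bool) i then 1 else 0 : ℕ)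
            * ∏ i, (if (Fin.cons p.1 p.2 : Fin (m+1) → Bool) i then B i else A i) := by
      refine (Fintype.sum_equiv (Fin.consEquiv (fun _ : Fin (m+1) => Bool))
        (fun p => (-1 : ℤ) ^ (∑ i, if (Fin.cons p.1 p.2 : Fin (m+1) → Bool) i then 1 else 0 : ℕ)
          * ∏ i, (if (Fin.cons p.1 p.2 : Fin (m+1) → Bool) i then B i else A i))
        (fun ε => (-1 : ℤ) ^ (∑ i, if ε i then 1 else 0 : ℕ) * ∏ i, (if ε i then B i else A i))
        (fun p => ?_)).symm
      rfl
    rw [hre, Fintype.sum_prod_type, Fintype.sum_bool]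
    have htrue : ∀ ε' : Fin m → Bool,
        (-1 : ℤ) ^ (∑ i, if (Fin.cons true ε' : Fin (m+1) → Bool) i then 1 else 0 : ℕ)
            * ∏ i, (if (Fin.cons true ε' : Fin (m+1) → Bool) i then B i else A i)
          = -(B 0 * ((-1 : ℤ) ^ (∑ i, if ε' i then 1 else 0 : ℕ)
            * ∏ i, (if ε' i then B i.succ else A i.succ))) := by
      intro ε'
      rw [Fin.sum_univ_succ, Fin.prod_univ_succ]
      simp only [Fin.cons_zero, Fin.cons_succ, if_true]
      rw [pow_add]
      ring
    have hfalse : ∀ ε' : Fin m → Bool,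
        (-1 : ℤ) ^ (∑ i, if (Fin.cons false ε' : Fin (m+1) → Bool) i then 1 else 0 : ℕ)
            * ∏ i, (if (Fin.cons false ε' : Fin (m+1) → Bool) i then B i else A i)
          = A 0 * ((-1 : ℤ) ^ (∑ i, if ε' i then 1 else 0 : ℕ)
            * ∏ i, (if ε' i then B i.succ else A i.succ)) := by
      intro ε'
      rw [Fin.sum_univ_succ, Fin.prod_univ_succ]
      simp only [Fin.cons_zero, Fin.cons_succ, Bool.false_eq_true, if_false, pow_add, pow_zero]
      ring
    rw [Finset.sum_congr rfl (fun ε' _ => htrue ε'), Finset.sum_congr rfl (fun ε' _ => hfalse ε')]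
    rw [Fin.prod_univ_succ, ih (fun i => A i.succ) (fun i => B i.succ)]
    rw [Finset.sum_neg_distrib, ← Finset.mul_sum, ← Finset.mul_sum]
    ring

lemma alt_identity (m : ℕ) (A B : Fin m → ℤ) :
    (∏ i, A i) - ∏ i, (A i - B i)
      = ∑ ε ∈ Finset.univ.filter (fun ε : Fin m → Bool => ε ≠ fun _ => false),
          (-1 : ℤ) ^ ((∑ i, if ε i then 1 else 0 : ℕ) + 1) * ∏ i, (if ε i then B i else A i) := by
  classical
  rw [hexp_bool m A B]
  rw [Finset.filter_ne' Finset.univ (fun _ => false)]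
  rw [← Finset.add_sum_erase Finset.univ _ (Finset.mem_univ (fun _ => false))]
  simp only [if_neg Bool.false_ne_true]
  have h0 : ((-1 : ℤ) ^ (∑ _i : Fin m, (0:ℕ)) * ∏ i, A i) = ∏ i, A i := by simp
  have hterm : ∀ ε : Fin m → Bool,
      (-1 : ℤ) ^ ((∑ i, if ε i then 1 else 0 : ℕ) + 1) * ∏ i, (if ε i then B i else A i)
        = -((-1 : ℤ) ^ (∑ i, if ε i then 1 else 0 : ℕ) * ∏ i, (if ε i then B i else A i)) := by
    intro ε
    rw [pow_succ]
    ring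
  rw [Finset.sum_congr rfl (fun ε _ => hterm ε), Finset.sum_neg_distrib]
  simp only [Finset.sum_const_zero, pow_zero, one_mul]
  ring

/-- The number `N_a` of zeros in `𝔽_q^{n₁+1} × ⋯ × 𝔽_q^{n_m+1}` of a nonzero
multihomogeneous polynomial of multidegree `(d₁,…,d_m)` with all `dᵢ < q` satisfies
`N_a ≤ ∏ᵢ q^{nᵢ+1} - q^{∑nᵢ} ∏ᵢ (q - dᵢ)`, and this bound equals the alternating sum
`∑_{ε ≠ 0} (-1)^{|ε|+1} ∏ᵢ dᵢ^{εᵢ} q^{nᵢ+1-εᵢ}`. -/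
theorem zeros_of_multihomogeneous_affine_bound
    (q m : ℕ) (hq : IsPrimePow q) (Fq : Type) [Field Fq] [Fintype Fq]
    (hcard : Fintype.card Fq = q) (n d : Fin m → ℕ)
    (F : MvPolynomial (Σ i : Fin m, Fin (n i + 1)) (AlgebraicClosure Fq))
    (hF : F ≠ 0)
    (hhom : ∀ mon ∈ F.support, ∀ i : Fin m, (∑ j : Fin (n i + 1), mon ⟨i, j⟩) = d i)
    (hqd : ∀ i, d i < q) :
    (Nat.card {x : (Σ i : Fin m, Fin (n i + 1)) → Fq |
        MvPolynomial.eval (fun v => algebraMap Fq (AlgebraicClosure Fq) (x v)) F = 0} : ℤ)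
      ≤ (∏ i, (q : ℤ) ^ (n i + 1)) - (q : ℤ) ^ (∑ i, n i) * (∏ i, ((q : ℤ) - (d i : ℤ)))
    ∧ (∏ i, (q : ℤ) ^ (n i + 1)) - (q : ℤ) ^ (∑ i, n i) * (∏ i, ((q : ℤ) - (d i : ℤ)))
      = ∑ ε ∈ Finset.univ.filter (fun ε : Fin m → Bool => ε ≠ fun _ => false),
          (-1 : ℤ) ^ ((∑ i, if ε i then 1 else 0) + 1) *
            ∏ i, (if ε i then (d i : ℤ) * (q : ℤ) ^ (n i) else (q : ℤ) ^ (n i + 1)) := by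
  classical
  have hAB : ∏ i, ((q:ℤ)^(n i + 1) - (d i : ℤ) * (q:ℤ)^(n i))
      = (q:ℤ)^(∑ i, n i) * ∏ i, ((q:ℤ) - (d i : ℤ)) := by
    calc ∏ i, ((q:ℤ)^(n i + 1) - (d i : ℤ) * (q:ℤ)^(n i))
        = ∏ i, ((q:ℤ)^(n i) * ((q:ℤ) - (d i : ℤ))) := by
          refine Finset.prod_congr rfl fun i _ => ?_
          rw [pow_succ]
          ring
      _ = (∏ i, (q:ℤ)^(n i)) * ∏ i, ((q:ℤ) - (d i : ℤ)) := Finset.prod_mul_distrib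
      _ = (q:ℤ)^(∑ i, n i) * ∏ i, ((q:ℤ) - (d i : ℤ)) := by
          rw [Finset.prod_pow_eq_pow_sum]
  constructor
  · -- the bound
    have hNB := multi_bound (algebraMap Fq (AlgebraicClosure Fq)) m n d F hF
      (fun mon hm i => (hhom mon hm i).le)
    rw [hcard] at hNB
    have hset : Nat.card {x : (Σ i : Fin m, Fin (n i + 1)) → Fq |
          MvPolynomial.eval (fun v => algebraMap Fq (AlgebraicClosure Fq) (x v)) F = 0}
        = Nat.card {x : (Σ i : Fin m, Fin (n i + 1)) → Fq //
            MvPolynomial.eval ((algebraMap Fq (AlgebraicClosure Fq)) ∘ x) F = 0} :=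
      Nat.card_congr (Equiv.subtypeEquivRight (fun x => Iff.rfl))
    have hcompl := card_compl (fun x : (Σ i : Fin m, Fin (n i + 1)) → Fq =>
      MvPolynomial.eval ((algebraMap Fq (AlgebraicClosure Fq)) ∘ x) F = 0)
    have hcard2 : Fintype.card ((Σ i : Fin m, Fin (n i + 1)) → Fq) = q ^ (∑ i, (n i + 1)) := by
      rw [Fintype.card_fun, hcard, Fintype.card_sigma]
      congr 1
      exact Finset.sum_congr rfl fun i _ => Fintype.card_fin _
    rw [hcard2] at hcompl
    have hne : Nat.card {x : (Σ i : Fin m, Fin (n i + 1)) → Fq //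
          MvPolynomial.eval ((algebraMap Fq (AlgebraicClosure Fq)) ∘ x) F ≠ 0}
        = Nat.card {x : (Σ i : Fin m, Fin (n i + 1)) → Fq //
            ¬ MvPolynomial.eval ((algebraMap Fq (AlgebraicClosure Fq)) ∘ x) F = 0} := rfl
    rw [hne] at hNB
    rw [hset]
    have hcast : ((∏ i, (q - d i) * q ^ (n i) : ℕ) : ℤ)
        = (q:ℤ)^(∑ i, n i) * ∏ i, ((q:ℤ) - (d i : ℤ)) := by
      rw [Nat.cast_prod]
      rw [← hAB]
      refine Finset.prod_congr rfl fun i _ => ?_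
      push_cast [Nat.cast_sub (hqd i).le]
      rw [pow_succ]
      ring
    have h2 : (q:ℤ)^(∑ i, n i) * ∏ i, ((q:ℤ) - (d i : ℤ))
        ≤ (Nat.card {x : (Σ i : Fin m, Fin (n i + 1)) → Fq //
            ¬ MvPolynomial.eval ((algebraMap Fq (AlgebraicClosure Fq)) ∘ x) F = 0} : ℤ) := by
      rw [← hcast]
      exact_mod_cast hNB
    have h1 : (Nat.card {x : (Σ i : Fin m, Fin (n i + 1)) → Fq //
          MvPolynomial.eval ((algebraMap Fq (AlgebraicClosure Fq)) ∘ x) F = 0} : ℤ)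
        + (Nat.card {x : (Σ i : Fin m, Fin (n i + 1)) → Fq //
            ¬ MvPolynomial.eval ((algebraMap Fq (AlgebraicClosure Fq)) ∘ x) F = 0} : ℤ)
        = (q:ℤ) ^ (∑ i, (n i + 1)) := by exact_mod_cast congrArg Nat.cast hcompl
    have hpow : (q:ℤ) ^ (∑ i, (n i + 1)) = ∏ i, (q:ℤ) ^ (n i + 1) :=
      (Finset.prod_pow_eq_pow_sum _ _ _).symm
    linarith
  · -- the identity
    have h := alt_identity m (fun i => (q:ℤ)^(n i + 1)) (fun i => (d i : ℤ) * (q:ℤ)^(n i))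
    rw [hAB] at h
    exact h
end

section
/- Let $F$ be a nonzero bihomogeneous polynomial in two groups of variables $X_1$ (with $n_1+1$ variables) and $X_2$ (with $n_2+1$ variables), homogeneous of degree $d_1$ in $X_1$ and $d_2$ in $X_2$, with $\max(d_1,d_2) < q$. Then the number of zeros of $F$ in $\mathbb{P}^{n_1}(\mathbb{F}_q) \times \mathbb{P}^{n_2}(\mathbb{F}_q)$ is at most $d_1 p_{n_1-1} p_{n_2} + d_2 p_{n_1} p_{n_2-1} - d_1 d_2 p_{n_1-1} p_{n_2-1}$, where $p_r := q^r + \cdots + q + 1$. -/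
open Finset MvPolynomial

private lemma my_sz {K : Type*} [Field K] [DecidableEq K] (S : Finset K) :
    ∀ (n : ℕ) (f : MvPolynomial (Fin n) K), f ≠ 0 →
      ((Fintype.piFinset fun _ : Fin n => S).filter (fun s => eval s f = 0)).card
        ≤ f.totalDegree * S.card ^ (n - 1) := by
  intro n
  induction n with
  | zero =>
    intro f hf
    obtain ⟨c, rfl⟩ := MvPolynomial.C_surjective (Fin 0) f
    have hc : c ≠ 0 := fun h => hf (by rw [h, map_zero])
    have h0 : ∀ s ∈ (Fintype.piFinset fun _ : Fin 0 => S), ¬ (eval s (C c) = 0) := by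
      intro s _; rw [eval_C]; exact hc
    rw [Finset.filter_false_of_mem h0, Finset.card_empty]
    exact Nat.zero_le _
  | succ n ih =>
    intro f hf
    set q' : Polynomial (MvPolynomial (Fin n) K) := finSuccEquiv K n f with hq'def
    have hq' : q' ≠ 0 := fun h => hf ((finSuccEquiv K n).injective (by simp [← hq'def, h]))
    set k : ℕ := q'.natDegree with hkdef
    set g : MvPolynomial (Fin n) K := q'.leadingCoeff with hgdef
    have hg : g ≠ 0 := Polynomial.leadingCoeff_ne_zero.mpr hq'
    have hdeg : g.totalDegree + k ≤ f.totalDegree := by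
      exact totalDegree_coeff_finSuccEquiv_add_le f k
        (by exact hg)
    set T := ((Fintype.piFinset fun _ : Fin (n+1) => S).filter (fun s => eval s f = 0)) with hT
    have hcard : T.card = ∑ t ∈ (Fintype.piFinset fun _ : Fin n => S),
        (T.filter (fun s => Fin.tail s = t)).card := by
      apply Finset.card_eq_sum_card_fiberwise
      intro s hs
      rw [hT, Finset.mem_coe, Finset.mem_filter, Fintype.mem_piFinset] at hs
      rw [Finset.mem_coe, Fintype.mem_piFinset]
      intro i; exact hs.1 _
    have hfiber : ∀ t ∈ (Fintype.piFinset fun _ : Fin n => S),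
        (T.filter (fun s => Fin.tail s = t)).card ≤
          (S.filter (fun y => Polynomial.eval y (q'.map (eval t)) = 0)).card := by
      intro t _
      apply Finset.card_le_card_of_injOn (fun s => s 0)
      · intro s hs
        rw [Finset.mem_coe, Finset.mem_filter, hT, Finset.mem_filter, Fintype.mem_piFinset] at hs
        obtain ⟨⟨hmem, hz⟩, htail⟩ := hs
        rw [Finset.mem_coe, Finset.mem_filter]
        refine ⟨hmem 0, ?_⟩
        have : s = Fin.cons (s 0) t := by
          rw [← htail]; exact (Fin.cons_self_tail s).symm
        rw [this] at hz
        rw [← eval_eq_eval_mv_eval']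
        exact hz
      · intro s₁ h₁ s₂ h₂ h0
        rw [Finset.mem_coe, Finset.mem_filter] at h₁ h₂
        have := h₁.2.trans h₂.2.symm
        funext i
        refine Fin.cases ?_ ?_ i
        · exact h0
        · intro j; exact congrFun this j
    have hgood : ∀ t ∈ (Fintype.piFinset fun _ : Fin n => S), eval t g ≠ 0 →
        (S.filter (fun y => Polynomial.eval y (q'.map (eval t)) = 0)).card ≤ k := by
      intro t _ hgt
      set P := q'.map (eval t) with hP
      have hPne : P ≠ 0 := by
        intro h
        apply hgt
        have hco := congrArg (fun r => Polynomial.coeff r k) h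
        simp only [hP, Polynomial.coeff_map, Polynomial.coeff_zero] at hco
        exact hco
      calc (S.filter (fun y => Polynomial.eval y P = 0)).card
          ≤ P.roots.toFinset.card := by
            apply Finset.card_le_card
            intro y hy
            rw [Finset.mem_filter] at hy
            rw [Multiset.mem_toFinset, Polynomial.mem_roots hPne]
            exact hy.2
        _ ≤ Multiset.card P.roots := P.roots.toFinset_card_le
        _ ≤ P.natDegree := P.card_roots'
        _ ≤ k := Polynomial.natDegree_map_le
    -- split
    have hsplit : T.card ≤ (g.totalDegree * S.card ^ (n - 1)) * S.card + S.card ^ n * k := by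
      rw [hcard]
      rw [← Finset.sum_filter_add_sum_filter_not (Fintype.piFinset fun _ : Fin n => S)
        (fun t => eval t g = 0)]
      gcongr ?_ + ?_
      · calc ∑ t ∈ (Fintype.piFinset fun _ : Fin n => S).filter (fun t => eval t g = 0),
              (T.filter (fun s => Fin.tail s = t)).card
            ≤ ∑ _t ∈ (Fintype.piFinset fun _ : Fin n => S).filter (fun t => eval t g = 0),
              S.card := by
              apply Finset.sum_le_sum
              intro t ht
              refine le_trans (hfiber t (Finset.mem_of_mem_filter _ ht)) ?_
              exact Finset.card_filter_le _ _
          _ = ((Fintype.piFinset fun _ : Fin n => S).filter (fun t => eval t g = 0)).card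
              * S.card := by rw [Finset.sum_const, smul_eq_mul]
          _ ≤ (g.totalDegree * S.card ^ (n - 1)) * S.card := by
              apply Nat.mul_le_mul_right
              exact ih g hg
      · calc ∑ t ∈ (Fintype.piFinset fun _ : Fin n => S).filter (fun t => ¬ eval t g = 0),
              (T.filter (fun s => Fin.tail s = t)).card
            ≤ ∑ t ∈ (Fintype.piFinset fun _ : Fin n => S).filter (fun t => ¬ eval t g = 0),
              k := by
              apply Finset.sum_le_sum
              intro t ht
              rw [Finset.mem_filter] at ht
              exact le_trans (hfiber t ht.1) (hgood t ht.1 ht.2)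
          _ ≤ S.card ^ n * k := by
              rw [Finset.sum_const, smul_eq_mul]
              apply Nat.mul_le_mul_right
              calc ((Fintype.piFinset fun _ : Fin n => S).filter _).card
                  ≤ (Fintype.piFinset fun _ : Fin n => S).card := Finset.card_filter_le _ _
                _ = S.card ^ n := by
                    rw [Fintype.card_piFinset, Finset.prod_const, Finset.card_univ,
                      Fintype.card_fin]
    refine hsplit.trans ?_
    have h1 : g.totalDegree * S.card ^ (n - 1) * S.card ≤ g.totalDegree * S.card ^ n := by
      rcases n with _ | m
      · have hg0 : g.totalDegree = 0 := by
          obtain ⟨c, hc2⟩ := MvPolynomial.C_surjective (Fin 0) g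
          rw [← hc2, totalDegree_C]
        simp [hg0]
      · rw [mul_assoc, ← pow_succ, Nat.succ_sub_one]
    calc g.totalDegree * S.card ^ (n - 1) * S.card + S.card ^ n * k
        ≤ g.totalDegree * S.card ^ n + k * S.card ^ n := by
          rw [mul_comm (S.card ^ n) k]; exact Nat.add_le_add_right h1 _
      _ = (g.totalDegree + k) * S.card ^ n := by ring
      _ ≤ f.totalDegree * S.card ^ (n + 1 - 1) := by
          simpa using Nat.mul_le_mul_right _ hdeg

private lemma my_nat_combine {a x y r : ℕ} (ha : r < a) (hx : a ∣ x) (hy : a ∣ y)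
    (h : x ≤ y + r) : x ≤ y := by
  obtain ⟨k, rfl⟩ := hx; obtain ⟨l, rfl⟩ := hy
  rcases le_or_gt k l with h' | h'
  · exact Nat.mul_le_mul_left a h'
  · have h2 : l + 1 ≤ k := h'
    nlinarith [Nat.mul_le_mul_left a h2]

private lemma my_dvd_card {Fq : Type*} [Field Fq] [Fintype Fq] [DecidableEq Fq] {N : ℕ}
    (Z : Finset (Fin N → Fq)) (h0 : ∀ x ∈ Z, x ≠ 0)
    (hs : ∀ x ∈ Z, ∀ c : Fq, c ≠ 0 → c • x ∈ Z) :
    (Fintype.card Fq - 1) ∣ Z.card := by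
  classical
  set C : Finset Fq := Finset.univ.filter (fun c => c ≠ 0) with hC
  have hCcard : C.card = Fintype.card Fq - 1 := by
    rw [hC, Finset.filter_ne', Finset.card_erase_of_mem (Finset.mem_univ _), Finset.card_univ]
  set orb : (Fin N → Fq) → Finset (Fin N → Fq) := fun x => C.image (fun c => c • x) with horb
  have hmem_self : ∀ x : Fin N → Fq, x ∈ orb x := by
    intro x
    rw [horb]
    apply Finset.mem_image.mpr
    exact ⟨1, by simp [hC], one_smul _ _⟩
  have horb_eq : ∀ (x : Fin N → Fq) (c : Fq), c ≠ 0 → orb (c • x) = orb x := by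
    intro x c hc
    ext y
    simp only [horb, Finset.mem_image, hC, Finset.mem_filter, Finset.mem_univ, true_and]
    constructor
    · rintro ⟨c', hc', rfl⟩
      exact ⟨c' * c, mul_ne_zero hc' hc, (smul_smul c' c x).symm ▸ rfl⟩
    · rintro ⟨c'', hc'', rfl⟩
      exact ⟨c'' * c⁻¹, mul_ne_zero hc'' (inv_ne_zero hc), by
        rw [smul_smul, mul_assoc, inv_mul_cancel₀ hc, mul_one]⟩
  have hcard_orb : ∀ x : Fin N → Fq, x ≠ 0 → (orb x).card = Fintype.card Fq - 1 := by
    intro x hx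
    rw [horb, ← hCcard]
    apply Finset.card_image_of_injOn
    intro c₁ _ c₂ _ heq
    obtain ⟨i, hi⟩ := Function.ne_iff.mp hx
    have := congrFun heq i
    simp only [Pi.smul_apply, smul_eq_mul] at this
    exact mul_right_cancel₀ (by simpa using hi) this
  have key : ∀ x ∈ Z, Z.filter (fun y => orb y = orb x) = orb x := by
    intro x hx
    ext y
    rw [Finset.mem_filter]
    constructor
    · rintro ⟨_, heq⟩
      rw [← heq]; exact hmem_self y
    · intro hy
      rw [horb, Finset.mem_image] at hy
      obtain ⟨c, hcmem, rfl⟩ := hy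
      rw [hC, Finset.mem_filter] at hcmem
      exact ⟨hs x hx c hcmem.2, horb_eq x c hcmem.2⟩
  have hfib : ∀ O ∈ Z.image orb, (Z.filter (fun y => orb y = O)).card = Fintype.card Fq - 1 := by
    intro O hO
    obtain ⟨x, hx, rfl⟩ := Finset.mem_image.mp hO
    rw [key x hx, hcard_orb x (h0 x hx)]
  rw [Finset.card_eq_sum_card_fiberwise (fun x hx => Finset.mem_image_of_mem orb hx)]
  rw [Finset.sum_congr rfl hfib, Finset.sum_const, smul_eq_mul]
  exact dvd_mul_left _ _

private lemma my_eval_smul {K : Type*} [CommSemiring K] {N : ℕ} {d : ℕ}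
    (f : MvPolynomial (Fin N) K) (hhom : ∀ m ∈ f.support, (∑ j, m j) = d)
    (c : K) (x : Fin N → K) :
    MvPolynomial.eval (c • x) f = c ^ d * MvPolynomial.eval x f := by
  rw [MvPolynomial.eval_eq', MvPolynomial.eval_eq', Finset.mul_sum]
  apply Finset.sum_congr rfl
  intro m hm
  rw [← hhom m hm]
  simp only [Pi.smul_apply, smul_eq_mul, mul_pow]
  rw [Finset.prod_mul_distrib, Finset.prod_pow_eq_pow_sum]
  ring

private lemma my_totalDegree_le {K : Type*} [CommSemiring K] {N : ℕ} {d : ℕ}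
    (f : MvPolynomial (Fin N) K) (hhom : ∀ m ∈ f.support, (∑ j, m j) = d) :
    f.totalDegree ≤ d := by
  apply Finset.sup_le
  intro m hm
  rw [Finsupp.sum_fintype _ _ (fun _ => rfl)]
  exact le_of_eq (hhom m hm)

private lemma my_coeff_zero {K : Type*} [CommSemiring K] {N : ℕ} {d : ℕ} (hd : 1 ≤ d)
    (f : MvPolynomial (Fin N) K) (hhom : ∀ m ∈ f.support, (∑ j, m j) = d) :
    MvPolynomial.constantCoeff f = 0 := by
  rw [MvPolynomial.constantCoeff_eq]
  by_contra h
  have hmem : (0 : Fin N →₀ ℕ) ∈ f.support := MvPolynomial.mem_support_iff.mpr h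
  have := hhom 0 hmem
  simp at this
  omega

private lemma my_base {Fq K : Type*} [Field Fq] [Fintype Fq] [DecidableEq Fq] [Field K]
    [DecidableEq K] (φ : Fq →+* K) {N d : ℕ} (hdq : d < Fintype.card Fq)
    (f : MvPolynomial (Fin (N + 1)) K) (hf : f ≠ 0)
    (hhom : ∀ m ∈ f.support, (∑ j, m j) = d) :
    ((Finset.univ : Finset (Fin (N + 1) → Fq)).filter
        (fun x => x ≠ 0 ∧ MvPolynomial.eval (fun j => φ (x j)) f = 0)).card
      ≤ d * (Fintype.card Fq ^ N - 1) := by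
  set q := Fintype.card Fq with hqdef
  set Z := (Finset.univ : Finset (Fin (N + 1) → Fq)).filter
      (fun x => x ≠ 0 ∧ MvPolynomial.eval (fun j => φ (x j)) f = 0) with hZ
  rcases Nat.eq_zero_or_pos d with hd0 | hd1
  · have hfc : f = C (constantCoeff f) := by
      ext m
      rcases eq_or_ne m 0 with rfl | hm
      · simp [constantCoeff_eq]
      · rw [coeff_C, if_neg (Ne.symm hm)]
        by_contra h
        have hmem : m ∈ f.support := mem_support_iff.mpr h
        have h1 := hhom m hmem
        rw [hd0] at h1
        apply hm
        ext j
        exact (Finset.sum_eq_zero_iff.mp h1) j (Finset.mem_univ j)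
    have hne : constantCoeff f ≠ 0 := fun h => hf (by rw [hfc, h, map_zero])
    have hzero : Z = ∅ := by
      rw [hZ]
      apply Finset.filter_false_of_mem
      rintro x - ⟨hx0, hxe⟩
      rw [hfc, eval_C] at hxe
      exact hne hxe
    rw [hzero]
    simp
  · have hφinj : Function.Injective φ := φ.injective
    set S : Finset K := Finset.univ.image φ with hS
    have hScard : S.card = q := by
      rw [hS, Finset.card_image_of_injective _ hφinj, Finset.card_univ]
    have hsz := my_sz S (N + 1) f hf
    have htd : f.totalDegree ≤ d := my_totalDegree_le f hhom
    have h0Z : (0 : Fin (N + 1) → Fq) ∉ Z := by rw [hZ]; simp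
    have hins : Z.card + 1 = (insert (0 : Fin (N + 1) → Fq) Z).card :=
      (Finset.card_insert_of_notMem h0Z).symm
    have hmap : (insert (0 : Fin (N + 1) → Fq) Z).card ≤
        ((Fintype.piFinset fun _ : Fin (N + 1) => S).filter (fun s => eval s f = 0)).card := by
      apply Finset.card_le_card_of_injOn (fun x => fun j => φ (x j))
      · intro x hx
        rw [Finset.mem_coe, Finset.mem_insert] at hx
        rw [Finset.mem_coe, Finset.mem_filter, Fintype.mem_piFinset]
        refine ⟨fun i => Finset.mem_image_of_mem φ (Finset.mem_univ _), ?_⟩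
        rcases hx with rfl | hx
        · have h00 : (fun j => φ ((0 : Fin (N + 1) → Fq) j)) = (0 : Fin (N + 1) → K) := by
            funext j; simp
          beta_reduce; rw [h00, MvPolynomial.eval_zero]
          exact my_coeff_zero hd1 f hhom
        · rw [hZ, Finset.mem_filter] at hx
          exact hx.2.2
      · intro x₁ _ x₂ _ h
        funext j
        exact hφinj (congrFun h j)
    have hZub : Z.card + 1 ≤ d * q ^ N := by
      calc Z.card + 1 = _ := hins
        _ ≤ _ := hmap
        _ ≤ f.totalDegree * S.card ^ (N + 1 - 1) := hsz
        _ ≤ d * q ^ N := by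
            rw [hScard, Nat.succ_sub_one]
            exact Nat.mul_le_mul_right _ htd
    have hdvdZ : (q - 1) ∣ Z.card := by
      apply my_dvd_card
      · intro x hx
        rw [hZ, Finset.mem_filter] at hx
        exact hx.2.1
      · intro x hx c hc
        rw [hZ, Finset.mem_filter] at hx ⊢
        refine ⟨Finset.mem_univ _, smul_ne_zero hc hx.2.1, ?_⟩
        have hsm : (fun j => φ ((c • x) j)) = φ c • (fun j => φ (x j)) := by
          funext j; simp
        rw [hsm, my_eval_smul f hhom, hx.2.2, mul_zero]
    have hdvdR : (q - 1) ∣ d * (q ^ N - 1) := by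
      apply Dvd.dvd.mul_left
      simpa using Nat.sub_dvd_pow_sub_pow q 1 N
    have hqN : 1 ≤ q ^ N := Nat.one_le_pow _ _ (by omega)
    have hdist : d * q ^ N = d * (q ^ N - 1) + d := by
      rw [← Nat.sub_add_cancel hqN, Nat.mul_add, mul_one, Nat.add_sub_cancel]
    apply my_nat_combine (a := q - 1) (r := d - 1) (by omega) hdvdZ hdvdR
    omega

private noncomputable def myr1 {N1 N2 : ℕ} (m : Fin N1 ⊕ Fin N2 →₀ ℕ) : Fin N1 →₀ ℕ :=
  Finsupp.equivFunOnFinite.symm (fun j => m (Sum.inl j))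

private noncomputable def myr2 {N1 N2 : ℕ} (m : Fin N1 ⊕ Fin N2 →₀ ℕ) : Fin N2 →₀ ℕ :=
  Finsupp.equivFunOnFinite.symm (fun j => m (Sum.inr j))

@[simp] private lemma myr1_apply {N1 N2 : ℕ} (m : Fin N1 ⊕ Fin N2 →₀ ℕ) (j : Fin N1) :
    myr1 m j = m (Sum.inl j) := rfl

@[simp] private lemma myr2_apply {N1 N2 : ℕ} (m : Fin N1 ⊕ Fin N2 →₀ ℕ) (j : Fin N2) :
    myr2 m j = m (Sum.inr j) := rfl

private lemma myr_inj {N1 N2 : ℕ} {m m' : Fin N1 ⊕ Fin N2 →₀ ℕ}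
    (h1 : myr1 m = myr1 m') (h2 : myr2 m = myr2 m') : m = m' := by
  ext i
  cases i with
  | inl j => simpa using DFunLike.congr_fun h1 j
  | inr j => simpa using DFunLike.congr_fun h2 j

private noncomputable def myspec {K : Type*} [CommSemiring K] {N1 N2 : ℕ}
    (F : MvPolynomial (Fin N1 ⊕ Fin N2) K) (a : Fin N1 → K) : MvPolynomial (Fin N2) K :=
  aeval (Sum.elim (fun j => C (a j)) X) F

private lemma myspec_eval {K : Type*} [CommSemiring K] {N1 N2 : ℕ}
    (F : MvPolynomial (Fin N1 ⊕ Fin N2) K) (a : Fin N1 → K) (b : Fin N2 → K) :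
    eval b (myspec F a) = eval (Sum.elim a b) F := by
  have h : ((eval b : MvPolynomial (Fin N2) K →+* K)).comp
      ((aeval (Sum.elim (fun j => C (a j)) X) :
        MvPolynomial (Fin N1 ⊕ Fin N2) K →ₐ[K] MvPolynomial (Fin N2) K) :
        MvPolynomial (Fin N1 ⊕ Fin N2) K →+* MvPolynomial (Fin N2) K)
      = (eval (Sum.elim a b) : MvPolynomial (Fin N1 ⊕ Fin N2) K →+* K) := by
    apply MvPolynomial.ringHom_ext
    · intro r; simp
    · intro i; cases i <;> simp
  exact RingHom.congr_fun h F

private lemma myspec_monomial {K : Type*} [CommSemiring K] {N1 N2 : ℕ}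
    (m : Fin N1 ⊕ Fin N2 →₀ ℕ) (c : K) (a : Fin N1 → K) :
    myspec (monomial m c) a
      = monomial (myr2 m) (c * ∏ j, a j ^ m (Sum.inl j)) := by
  rw [myspec, aeval_monomial]
  rw [Finsupp.prod_fintype _ _ (fun i => pow_zero _)]
  rw [Fintype.prod_sum_type]
  have h1 : (∏ j : Fin N1, Sum.elim (fun j => C (a j))
      (X : Fin N2 → MvPolynomial (Fin N2) K) (Sum.inl j) ^ m (Sum.inl j))
      = C (∏ j, a j ^ m (Sum.inl j)) := by
    rw [map_prod]
    apply Finset.prod_congr rfl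
    intro j _
    simp [map_pow]
  have h2 : (∏ j : Fin N2, Sum.elim (fun j => C (a j))
      (X : Fin N2 → MvPolynomial (Fin N2) K) (Sum.inr j) ^ m (Sum.inr j))
      = monomial (myr2 m) (1 : K) := by
    rw [monomial_eq, Finsupp.prod_fintype _ _ (fun i => pow_zero _)]
    simp [myr2_apply]
  rw [h1, h2]
  rw [algebraMap_eq]
  rw [← mul_assoc, ← C_mul, C_mul_monomial, mul_one]

private lemma myspec_sum {K : Type*} [CommSemiring K] {N1 N2 : ℕ}
    (F : MvPolynomial (Fin N1 ⊕ Fin N2) K) (a : Fin N1 → K) :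
    myspec F a = ∑ m ∈ F.support,
      monomial (myr2 m) (F.coeff m * ∏ j, a j ^ m (Sum.inl j)) := by
  conv_lhs => rw [show myspec F a = aeval (Sum.elim (fun j => C (a j)) X) F from rfl,
    ← support_sum_monomial_coeff F, map_sum]
  apply Finset.sum_congr rfl
  intro m _
  exact myspec_monomial m (F.coeff m) a

private lemma myspec_support {K : Type*} [CommSemiring K] {N1 N2 : ℕ}
    (F : MvPolynomial (Fin N1 ⊕ Fin N2) K) (a : Fin N1 → K) :
    ∀ μ ∈ (myspec F a).support, ∃ m ∈ F.support, μ = myr2 m := by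
  classical
  intro μ hμ
  rw [myspec_sum] at hμ
  have := MvPolynomial.support_sum hμ
  rw [Finset.mem_biUnion] at this
  obtain ⟨m, hm, hmem⟩ := this
  refine ⟨m, hm, ?_⟩
  have := MvPolynomial.support_monomial_subset hmem
  rw [Finset.mem_singleton] at this
  exact this

private noncomputable def myH {K : Type*} [CommSemiring K] {N1 N2 : ℕ}
    (F : MvPolynomial (Fin N1 ⊕ Fin N2) K) (μ : Fin N2 →₀ ℕ) :
    MvPolynomial (Fin N1) K :=
  ∑ m ∈ F.support, if myr2 m = μ then monomial (myr1 m) (F.coeff m) else 0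

private lemma myH_eval_coeff {K : Type*} [CommSemiring K] {N1 N2 : ℕ}
    (F : MvPolynomial (Fin N1 ⊕ Fin N2) K) (μ : Fin N2 →₀ ℕ) (a : Fin N1 → K) :
    MvPolynomial.coeff μ (myspec F a) = eval a (myH F μ) := by
  classical
  rw [myspec_sum, MvPolynomial.coeff_sum, myH, map_sum]
  apply Finset.sum_congr rfl
  intro m _
  rw [coeff_monomial]
  split_ifs with h
  · rw [eval_monomial, Finsupp.prod_fintype _ _ (fun i => pow_zero _)]
    simp [myr1_apply]
  · rw [map_zero]

private lemma myH_support {K : Type*} [CommSemiring K] {N1 N2 : ℕ}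
    (F : MvPolynomial (Fin N1 ⊕ Fin N2) K) (μ : Fin N2 →₀ ℕ) :
    ∀ ν ∈ (myH F μ).support, ∃ m ∈ F.support, ν = myr1 m := by
  classical
  intro ν hν
  rw [myH] at hν
  have := MvPolynomial.support_sum hν
  rw [Finset.mem_biUnion] at this
  obtain ⟨m, hm, hmem⟩ := this
  refine ⟨m, hm, ?_⟩
  split_ifs at hmem with h
  · have := MvPolynomial.support_monomial_subset hmem
    rw [Finset.mem_singleton] at this
    exact this
  · simp at hmem

private lemma myH_ne_zero {K : Type*} [CommSemiring K] {N1 N2 : ℕ}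
    (F : MvPolynomial (Fin N1 ⊕ Fin N2) K) (m₀ : Fin N1 ⊕ Fin N2 →₀ ℕ)
    (hm₀ : m₀ ∈ F.support) : myH F (myr2 m₀) ≠ 0 := by
  classical
  intro h
  have hco : MvPolynomial.coeff (myr1 m₀) (myH F (myr2 m₀)) = F.coeff m₀ := by
    rw [myH, MvPolynomial.coeff_sum]
    rw [Finset.sum_eq_single_of_mem m₀ hm₀]
    · rw [if_pos rfl, coeff_monomial, if_pos rfl]
    · intro m hm hne
      split_ifs with h2
      · rw [coeff_monomial]
        rw [if_neg]
        intro h1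
        exact hne (myr_inj h1 h2)
      · rw [MvPolynomial.coeff_zero]
  rw [h, MvPolynomial.coeff_zero] at hco
  exact (MvPolynomial.mem_support_iff.mp hm₀) hco.symm

set_option maxHeartbeats 1600000 in
set_option maxHeartbeats 1600000 in
/-- Case `m = 2` of the multiprojective bound: the number of zeros in
`ℙ^{n₁}(𝔽_q) × ℙ^{n₂}(𝔽_q)` of a nonzero bihomogeneous polynomial of bidegree `(d₁,d₂)`
with `max(d₁,d₂) < q` is at most
`d₁ p_{n₁-1} p_{n₂} + d₂ p_{n₁} p_{n₂-1} - d₁ d₂ p_{n₁-1} p_{n₂-1}`.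
Projective zeros are counted via pairs of nonzero vector representatives: each projective
zero corresponds to exactly `(q-1)²` such pairs. -/
theorem zeros_of_bihomogeneous_biprojective_bound
    (q n1 n2 d1 d2 : ℕ) (hq : IsPrimePow q) (hn1 : 1 ≤ n1) (hn2 : 1 ≤ n2)
    (hd : max d1 d2 < q) (Fq : Type) [Field Fq] [Fintype Fq]
    (hcard : Fintype.card Fq = q)
    (F : MvPolynomial (Fin (n1 + 1) ⊕ Fin (n2 + 1)) (AlgebraicClosure Fq))
    (hF : F ≠ 0)
    (hhom1 : ∀ mon ∈ F.support, (∑ j : Fin (n1 + 1), mon (Sum.inl j)) = d1)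
    (hhom2 : ∀ mon ∈ F.support, (∑ j : Fin (n2 + 1), mon (Sum.inr j)) = d2)
    (p : ℕ → ℕ) (hp : ∀ k, p k = ∑ i ∈ Finset.range (k + 1), q ^ i) :
    (Nat.card {xy : (Fin (n1 + 1) → Fq) × (Fin (n2 + 1) → Fq) |
        xy.1 ≠ 0 ∧ xy.2 ≠ 0 ∧
        MvPolynomial.eval
          (fun v => algebraMap Fq (AlgebraicClosure Fq) (Sum.elim xy.1 xy.2 v)) F = 0} : ℤ)
      ≤ ((q : ℤ) - 1) ^ 2 *
          ((d1 : ℤ) * (p (n1 - 1) : ℤ) * (p n2 : ℤ)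
            + (d2 : ℤ) * (p n1 : ℤ) * (p (n2 - 1) : ℤ)
            - (d1 : ℤ) * (d2 : ℤ) * (p (n1 - 1) : ℤ) * (p (n2 - 1) : ℤ)) := by
  classical
  have hd1 : d1 < q := lt_of_le_of_lt (le_max_left _ _) hd
  have hd2 : d2 < q := lt_of_le_of_lt (le_max_right _ _) hd
  have hq2 : 2 ≤ q := hcard ▸ Fintype.one_lt_card
  set K := AlgebraicClosure Fq with hKdef
  let φ : Fq →+* K := algebraMap Fq K
  set P : ((Fin (n1+1) → Fq) × (Fin (n2+1) → Fq)) → Prop := fun xy =>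
    xy.1 ≠ 0 ∧ xy.2 ≠ 0 ∧
      MvPolynomial.eval (fun v => φ (Sum.elim xy.1 xy.2 v)) F = 0 with hPdef
  have hNat : Nat.card {xy : (Fin (n1+1) → Fq) × (Fin (n2+1) → Fq) | P xy}
      = (Finset.univ.filter P).card := by
    rw [Nat.card_coe_set_eq, Set.ncard_eq_toFinset_card', Set.toFinset_setOf]
  have helim : ∀ (x : Fin (n1+1) → Fq) (y : Fin (n2+1) → Fq),
      (fun v => φ (Sum.elim x y v))
        = Sum.elim (fun j => φ (x j)) (fun j => φ (y j)) := by
    intro x y; funext v; cases v <;> rfl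
  have hPev : ∀ (x : Fin (n1+1) → Fq) (y : Fin (n2+1) → Fq),
      (MvPolynomial.eval (fun v => φ (Sum.elim x y v)) F = 0) ↔
        (MvPolynomial.eval (fun j => φ (y j)) (myspec F (fun j => φ (x j))) = 0) := by
    intro x y
    rw [myspec_eval, helim x y]
  -- the nonzero x's
  set t : Finset (Fin (n1+1) → Fq) := Finset.univ.filter (fun x => x ≠ 0) with htdef
  have htcard : t.card = q ^ (n1+1) - 1 := by
    rw [htdef, Finset.filter_ne', Finset.card_erase_of_mem (Finset.mem_univ _),
      Finset.card_univ, Fintype.card_fun, Fintype.card_fin, hcard]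
  -- per-x counts
  set Ycount : (Fin (n1+1) → Fq) → ℕ := fun x =>
    (Finset.univ.filter (fun y : Fin (n2+1) → Fq => y ≠ 0 ∧
      MvPolynomial.eval (fun j => φ (y j)) (myspec F (fun j => φ (x j))) = 0)).card
    with hYdef
  have hfibermem : ∀ xy ∈ Finset.univ.filter P, xy.1 ∈ t := by
    intro xy hxy
    rw [Finset.mem_filter] at hxy
    rw [htdef, Finset.mem_filter]
    exact ⟨Finset.mem_univ _, hxy.2.1⟩
  have hfiber : ∀ x ∈ t,
      ((Finset.univ.filter P).filter (fun xy => xy.1 = x)).card = Ycount x := by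
    intro x hx
    rw [htdef, Finset.mem_filter] at hx
    apply Finset.card_bij (fun xy _ => xy.2)
    · intro xy hxy
      rw [Finset.mem_filter, Finset.mem_filter] at hxy
      obtain ⟨⟨-, h1, h2, h3⟩, h4⟩ := hxy
      rw [Finset.mem_filter]
      refine ⟨Finset.mem_univ _, h2, ?_⟩
      rw [← h4, ← hPev]
      exact h3
    · intro xy hxy xy' hxy' heq
      rw [Finset.mem_filter] at hxy hxy'
      exact Prod.ext (hxy.2.trans hxy'.2.symm) heq
    · intro y hy
      rw [Finset.mem_filter] at hy
      refine ⟨(x, y), ?_, rfl⟩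
      rw [Finset.mem_filter, Finset.mem_filter]
      exact ⟨⟨Finset.mem_univ _, hx.2, hy.2.1, (hPev x y).mpr hy.2.2⟩, rfl⟩
  have hsum : (Finset.univ.filter P).card = ∑ x ∈ t, Ycount x := by
    rw [Finset.card_eq_sum_card_fiberwise hfibermem]
    exact Finset.sum_congr rfl hfiber
  -- the bad set
  set B : Finset (Fin (n1+1) → Fq) :=
    t.filter (fun x => myspec F (fun j => φ (x j)) = 0) with hBdef
  have hBt : B ⊆ t := Finset.filter_subset _ _
  -- bound on B
  have hBbound : B.card ≤ d1 * (q ^ n1 - 1) := by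
    obtain ⟨m₀, hm₀⟩ := Finset.nonempty_iff_ne_empty.mpr
      (fun h => hF (MvPolynomial.support_eq_empty.mp h))
    have hHne := myH_ne_zero F m₀ hm₀
    have hhomH : ∀ ν ∈ (myH F (myr2 m₀)).support, (∑ j, ν j) = d1 := by
      intro ν hν
      obtain ⟨m, hm, rfl⟩ := myH_support F (myr2 m₀) ν hν
      calc (∑ j, myr1 m j) = ∑ j, m (Sum.inl j) := by
            apply Finset.sum_congr rfl; intro j _; rw [myr1_apply]
        _ = d1 := hhom1 m hm
    have hbase := my_base φ (hcard ▸ hd1) (myH F (myr2 m₀)) hHne hhomH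
    rw [hcard] at hbase
    refine le_trans (Finset.card_le_card ?_) hbase
    intro x hx
    rw [hBdef, Finset.mem_filter, htdef, Finset.mem_filter] at hx
    rw [Finset.mem_filter]
    refine ⟨Finset.mem_univ _, hx.1.2, ?_⟩
    have := myH_eval_coeff F (myr2 m₀) (fun j => φ (x j))
    rw [hx.2, MvPolynomial.coeff_zero] at this
    exact this.symm
  -- bound for good x
  have hgood : ∀ x ∈ t, x ∉ B → Ycount x ≤ d2 * (q ^ n2 - 1) := by
    intro x hx hxB
    have hne : myspec F (fun j => φ (x j)) ≠ 0 := by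
      intro h
      exact hxB (by rw [hBdef, Finset.mem_filter]; exact ⟨hx, h⟩)
    have hhomS : ∀ μ ∈ (myspec F (fun j => φ (x j))).support, (∑ j, μ j) = d2 := by
      intro μ hμ
      obtain ⟨m, hm, rfl⟩ := myspec_support F (fun j => φ (x j)) μ hμ
      calc (∑ j, myr2 m j) = ∑ j, m (Sum.inr j) := by
            apply Finset.sum_congr rfl; intro j _; rw [myr2_apply]
        _ = d2 := hhom2 m hm
    have hbase := my_base φ (hcard ▸ hd2) (myspec F (fun j => φ (x j))) hne hhomS
    rw [hcard] at hbase
    exact hbase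
  -- trivial bound for bad x
  have hbad : ∀ x : Fin (n1+1) → Fq, Ycount x ≤ q ^ (n2+1) - 1 := by
    intro x
    have : Ycount x ≤ (Finset.univ.filter
        (fun y : Fin (n2+1) → Fq => y ≠ 0)).card := by
      apply Finset.card_le_card
      intro y hy
      rw [Finset.mem_filter] at hy ⊢
      exact ⟨hy.1, hy.2.1⟩
    refine le_trans this (le_of_eq ?_)
    rw [Finset.filter_ne', Finset.card_erase_of_mem (Finset.mem_univ _),
      Finset.card_univ, Fintype.card_fun, Fintype.card_fin, hcard]
  -- split the sum
  have hsplit : (Finset.univ.filter P).card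
      ≤ B.card * (q ^ (n2+1) - 1) + (t.card - B.card) * (d2 * (q ^ n2 - 1)) := by
    rw [hsum, ← Finset.sum_filter_add_sum_filter_not t (fun x => x ∈ B)]
    have hfB : t.filter (fun x => x ∈ B) = B := by
      rw [Finset.filter_mem_eq_inter]
      exact Finset.inter_eq_right.mpr hBt
    have hfnB : (t.filter (fun x => x ∉ B)).card = t.card - B.card := by
      rw [← Finset.sdiff_eq_filter, Finset.card_sdiff_of_subset hBt]
    gcongr ?_ + ?_
    · rw [hfB]
      calc ∑ x ∈ B, Ycount x ≤ ∑ _x ∈ B, (q ^ (n2+1) - 1) :=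
            Finset.sum_le_sum (fun x _ => hbad x)
        _ = B.card * (q ^ (n2+1) - 1) := by rw [Finset.sum_const, smul_eq_mul]
    · calc ∑ x ∈ t.filter (fun x => x ∉ B), Ycount x
          ≤ ∑ x ∈ t.filter (fun x => x ∉ B), (d2 * (q ^ n2 - 1)) := by
            apply Finset.sum_le_sum
            intro x hx
            rw [Finset.mem_filter] at hx
            exact hgood x hx.1 hx.2
        _ = (t.card - B.card) * (d2 * (q ^ n2 - 1)) := by
            rw [Finset.sum_const, smul_eq_mul, hfnB]
  -- pass to ℤ
  have hq0 : 0 < q := by omega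
  have h1a : 1 ≤ q ^ (n2+1) := Nat.one_le_pow _ _ hq0
  have h1b : 1 ≤ q ^ n2 := Nat.one_le_pow _ _ hq0
  have h1c : 1 ≤ q ^ n1 := Nat.one_le_pow _ _ hq0
  have h1d : 1 ≤ q ^ (n1+1) := Nat.one_le_pow _ _ hq0
  have hBt_le : B.card ≤ t.card := Finset.card_le_card hBt
  zify [h1a, h1b, h1c, h1d, hBt_le] at hsplit hBbound htcard
  have hgeom : ∀ k : ℕ, ((q : ℤ) - 1) * (p k : ℤ) = (q : ℤ) ^ (k+1) - 1 := by
    intro k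
    rw [hp k]
    push_cast
    rw [mul_comm]
    exact geom_sum_mul (q : ℤ) (k+1)
  have e1 : ((q : ℤ) - 1) * (p (n1-1) : ℤ) = (q : ℤ) ^ n1 - 1 := by
    have := hgeom (n1 - 1)
    rwa [show n1 - 1 + 1 = n1 by omega] at this
  have e2 : ((q : ℤ) - 1) * (p n1 : ℤ) = (q : ℤ) ^ (n1+1) - 1 := hgeom n1
  have e3 : ((q : ℤ) - 1) * (p (n2-1) : ℤ) = (q : ℤ) ^ n2 - 1 := by
    have := hgeom (n2 - 1)
    rwa [show n2 - 1 + 1 = n2 by omega] at this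
  have e4 : ((q : ℤ) - 1) * (p n2 : ℤ) = (q : ℤ) ^ (n2+1) - 1 := hgeom n2
  have hRHS : ((q : ℤ) - 1) ^ 2 *
      ((d1 : ℤ) * (p (n1 - 1) : ℤ) * (p n2 : ℤ)
        + (d2 : ℤ) * (p n1 : ℤ) * (p (n2 - 1) : ℤ)
        - (d1 : ℤ) * (d2 : ℤ) * (p (n1 - 1) : ℤ) * (p (n2 - 1) : ℤ))
      = (d1 : ℤ) * ((q:ℤ) ^ n1 - 1) * ((q:ℤ) ^ (n2+1) - 1)
        + (d2 : ℤ) * ((q:ℤ) ^ (n1+1) - 1) * ((q:ℤ) ^ n2 - 1)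
        - (d1 : ℤ) * (d2 : ℤ) * ((q:ℤ) ^ n1 - 1) * ((q:ℤ) ^ n2 - 1) := by
    rw [← e1, ← e2, ← e3, ← e4]
    ring
  have hmono : (d2 : ℤ) * ((q:ℤ) ^ n2 - 1) ≤ (q:ℤ) ^ (n2+1) - 1 := by
    have hd2z : (d2 : ℤ) ≤ (q : ℤ) - 1 := by omega
    have hp1 : (1 : ℤ) ≤ (q:ℤ) ^ n2 := by exact_mod_cast h1b
    have hps : ((q:ℤ)) ^ (n2+1) = (q:ℤ) ^ n2 * (q:ℤ) := pow_succ _ _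
    have hqz : (2 : ℤ) ≤ (q : ℤ) := by exact_mod_cast hq2
    have h5 : (d2:ℤ) * ((q:ℤ)^n2 - 1) ≤ ((q:ℤ) - 1) * ((q:ℤ)^n2 - 1) :=
      mul_le_mul_of_nonneg_right hd2z (by linarith)
    have h6 : ((q:ℤ) - 1) * ((q:ℤ)^n2 - 1) = (q:ℤ)^(n2+1) - (q:ℤ)^n2 - (q:ℤ) + 1 := by
      rw [hps]; ring
    linarith only [h5, h6, hp1, hqz]
  have hA2 : (B.card : ℤ) ≤ (q:ℤ) ^ (n1+1) - 1 := by
    calc (B.card : ℤ) ≤ (t.card : ℤ) := by exact_mod_cast hBt_le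
      _ = (q:ℤ) ^ (n1+1) - 1 := htcard
  have hkey : (0:ℤ) ≤ ((d1:ℤ) * ((q:ℤ) ^ n1 - 1) - (B.card : ℤ))
      * (((q:ℤ) ^ (n2+1) - 1) - (d2:ℤ) * ((q:ℤ) ^ n2 - 1)) :=
    mul_nonneg (sub_nonneg.mpr hBbound) (sub_nonneg.mpr hmono)
  rw [hNat, hRHS]
  rw [htcard] at hsplit
  have expand : (B.card : ℤ) * ((q:ℤ) ^ (n2+1) - 1)
      + (((q:ℤ) ^ (n1+1) - 1) - (B.card : ℤ)) * ((d2:ℤ) * ((q:ℤ) ^ n2 - 1))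
      = ((d1 : ℤ) * ((q:ℤ) ^ n1 - 1) * ((q:ℤ) ^ (n2+1) - 1)
        + (d2 : ℤ) * ((q:ℤ) ^ (n1+1) - 1) * ((q:ℤ) ^ n2 - 1)
        - (d1 : ℤ) * (d2 : ℤ) * ((q:ℤ) ^ n1 - 1) * ((q:ℤ) ^ n2 - 1))
        - ((d1:ℤ) * ((q:ℤ) ^ n1 - 1) - (B.card : ℤ))
          * (((q:ℤ) ^ (n2+1) - 1) - (d2:ℤ) * ((q:ℤ) ^ n2 - 1)) := by
    ring
  linarith only [hsplit, hkey, expand]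
end

section
/- Let $d \ge 2$ and $n \ge 1$, and suppose a hypersurface of degree $d$ in $\mathbb{P}^n$ has at most $dq^{n-1} + p_{n-2}$ points over $\mathbb{F}_q$ (Serre's bound). Then a multihomogeneous hypersurface in $(\mathbb{P}^n)^m$ of multidegree $(d,\ldots,d)$ has at most $p_n^m - (q^n - (d-1)q^{n-1})^m$ points over $\mathbb{F}_q$, where $p_r := q^r + \cdots + 1$. -/
open MvPolynomial

namespace MultihomAux

open MvPolynomial


variable {R : Type*} [CommSemiring R] {S₁ S₂ : Type*}

lemma sumElim_eq_sumElim_iff {M : Type*} [Zero M] {e e' : S₁ →₀ M} {w w' : S₂ →₀ M} :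
    e.sumElim w = e'.sumElim w' ↔ e = e' ∧ w = w' := by
  constructor
  · intro h
    constructor <;> ext a
    · exact DFunLike.congr_fun h (Sum.inl a)
    · exact DFunLike.congr_fun h (Sum.inr a)
  · rintro ⟨rfl, rfl⟩; rfl

lemma sumElim_eq_mapDomain (e : S₁ →₀ ℕ) (w : S₂ →₀ ℕ) :
    e.sumElim w = e.mapDomain Sum.inl + w.mapDomain Sum.inr := by
  ext x
  cases x with
  | inl a =>
      rw [Finsupp.add_apply, Finsupp.mapDomain_apply Sum.inl_injective,
        Finsupp.mapDomain_notin_range _ _ (by simp), Finsupp.sumElim_inl, add_zero]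
  | inr b =>
      rw [Finsupp.add_apply, Finsupp.mapDomain_apply Sum.inr_injective,
        Finsupp.mapDomain_notin_range _ _ (by simp), Finsupp.sumElim_inr, zero_add]

lemma sumAlgEquiv_monomial (e : S₁ →₀ ℕ) (w : S₂ →₀ ℕ) (a : R) :
    sumAlgEquiv R S₁ S₂ (monomial (e.sumElim w) a) = monomial e (monomial w a) := by
  have h : (monomial (e.sumElim w) a : MvPolynomial (S₁ ⊕ S₂) R)
      = rename Sum.inl (monomial e a) * rename Sum.inr (monomial w 1) := by
    rw [rename_monomial, rename_monomial, monomial_mul, mul_one, sumElim_eq_mapDomain]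
  rw [h, map_mul]
  have h1 : sumAlgEquiv R S₁ S₂ (rename Sum.inl (monomial e a))
      = MvPolynomial.map (algebraMap R (MvPolynomial S₂ R)) (monomial e a) := by
    have := congrArg (fun f => f (monomial e a)) (sumAlgEquiv_comp_rename_inl R S₁ S₂)
    simpa using this
  have h2 : sumAlgEquiv R S₁ S₂ (rename Sum.inr (monomial w 1))
      = C (monomial w (1 : R)) := by
    have := congrArg (fun f => f (monomial w (1 : R))) (sumAlgEquiv_comp_rename_inr R S₁ S₂)
    simpa using this
  rw [h1, h2, map_monomial, mul_comm, C_mul_monomial]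
  congr 1
  rw [algebraMap_eq, mul_comm, C_mul_monomial, mul_one]

lemma coeff_coeff_sumAlgEquiv (F : MvPolynomial (S₁ ⊕ S₂) R) (e : S₁ →₀ ℕ) (w : S₂ →₀ ℕ) :
    coeff w (coeff e (sumAlgEquiv R S₁ S₂ F)) = coeff (e.sumElim w) F := by
  classical
  induction F using MvPolynomial.induction_on' with
  | monomial μ a =>
      obtain ⟨⟨μ₁, μ₂⟩, rfl⟩ : ∃ p : (S₁ →₀ ℕ) × (S₂ →₀ ℕ), Finsupp.sumElim p.1 p.2 = μ :=
        ⟨Finsupp.sumFinsuppEquivProdFinsupp μ,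
          Finsupp.sumFinsuppEquivProdFinsupp.symm_apply_apply μ⟩
      rw [sumAlgEquiv_monomial]
      by_cases h1 : μ₁ = e <;> by_cases h2 : μ₂ = w <;>
        simp [MvPolynomial.coeff_monomial, sumElim_eq_sumElim_iff, h1, h2]
  | add p r hp hr => simp only [map_add, coeff_add, hp, hr]

lemma eval_sumAlgEquiv {K : Type*} [CommSemiring K] (F : MvPolynomial (S₁ ⊕ S₂) K)
    (f : S₁ → K) (g : S₂ → K) :
    eval f (MvPolynomial.map (eval g) (sumAlgEquiv K S₁ S₂ F)) = eval (Sum.elim f g) F := by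
  induction F using MvPolynomial.induction_on with
  | C a => simp [sumAlgEquiv_C_inl, sumToIter_C]
  | add p r hp hr => simp_all [map_add]
  | mul_X p s ih =>
      cases s <;> simp_all [map_mul, sumAlgEquiv_X_inl, sumAlgEquiv_X_inr, sumToIter_Xl, sumToIter_Xr]



/-- Splitting off the last variable group. -/
def grpSplit (m n : ℕ) : (Fin (m + 1) × Fin (n + 1)) ≃ (Fin (n + 1) ⊕ (Fin m × Fin (n + 1))) where
  toFun v := if h : (v.1 : ℕ) < m then Sum.inr (⟨v.1, h⟩, v.2) else Sum.inl v.2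
  invFun s := Sum.elim (fun j => (Fin.last m, j)) (fun w => (w.1.castSucc, w.2)) s
  left_inv := by
    rintro ⟨i, j⟩
    by_cases h : (i : ℕ) < m
    · simp only [dif_pos h, Sum.elim_inr]
      exact Prod.ext (Fin.ext rfl) rfl
    · simp only [dif_neg h, Sum.elim_inl]
      have : i = Fin.last m := by
        have hi := i.isLt
        apply Fin.ext
        simp only [Fin.val_last]
        omega
      rw [this]
  right_inv := by
    rintro (j | ⟨i, j⟩)
    · simp only [Sum.elim_inl]
      exact dif_neg (by simp)
    · simp only [Sum.elim_inr]
      exact (dif_pos (by simp)).trans (congrArg Sum.inr (Prod.ext (Fin.ext rfl) rfl))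

lemma grpSplit_castSucc (m n : ℕ) (i : Fin m) (j : Fin (n + 1)) :
    grpSplit m n (i.castSucc, j) = Sum.inr (i, j) := by
  simp only [grpSplit, Equiv.coe_fn_mk]
  rw [dif_pos (by simp)]
  exact congrArg Sum.inr (Prod.ext (Fin.ext rfl) rfl)

lemma grpSplit_last (m n : ℕ) (j : Fin (n + 1)) :
    grpSplit m n (Fin.last m, j) = Sum.inl j := by
  simp only [grpSplit, Equiv.coe_fn_mk]
  rw [dif_neg (by simp)]

lemma card_split {V : Type*} [Fintype V] {m : ℕ} (p : (Fin (m + 1) → V) → Prop) :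
    Nat.card {x : Fin (m + 1) → V | p x}
      = ∑ y : Fin m → V, Nat.card {z : V | p (Fin.snoc y z)} := by
  classical
  have e : {x : Fin (m + 1) → V // p x}
      ≃ Σ y : Fin m → V, {z : V // p (Fin.snoc y z)} := by
    refine Equiv.trans ?_
      (Equiv.subtypeProdEquivSigmaSubtype fun (y : Fin m → V) (z : V) => p (Fin.snoc y z))
    refine Equiv.symm ?_
    refine ((Equiv.prodComm (Fin m → V) V).trans (Fin.snocEquiv (fun _ => V))).subtypeEquiv ?_
    intro w
    constructor
    · intro hw
      convert hw using 2
      rfl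
    · intro hw
      convert hw using 2
      rfl
  have h1 : Nat.card {x : Fin (m + 1) → V | p x}
      = Nat.card (Σ y : Fin m → V, {z : V // p (Fin.snoc y z)}) := Nat.card_congr e
  rw [h1, Nat.card_eq_fintype_card, Fintype.card_sigma]
  exact Finset.sum_congr rfl fun y _ => (Nat.card_eq_fintype_card).symm




lemma sum_count_bound {Y : Type*} [Fintype Y] (f : Y → ℕ) (good bad : Y → Prop)
    [DecidablePred good] [DecidablePred bad] (X Yv SB GB : ℤ) (hXY : 0 ≤ X - Yv)
    (h1 : ∀ y, good y → (f y : ℤ) ≤ X)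
    (h0 : ∀ y, ¬ good y → f y = 0)
    (h2 : ∀ y, good y → ¬ bad y → (f y : ℤ) ≤ Yv)
    (hS : ((Nat.card {y : Y // good y ∧ bad y} : ℕ) : ℤ) ≤ SB)
    (hG : ((Nat.card {y : Y // good y} : ℕ) : ℤ) = GB) :
    (∑ y : Y, (f y : ℤ)) ≤ GB * Yv + SB * (X - Yv) := by
  classical
  set Gd := Finset.univ.filter good with hGddef
  set S := Finset.univ.filter (fun y => good y ∧ bad y) with hSdef
  have hSsub : S ⊆ Gd := by
    intro y hy
    simp only [hSdef, hGddef, Finset.mem_filter] at *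
    exact ⟨hy.1, hy.2.1⟩
  have hstep1 : (∑ y : Y, (f y : ℤ)) = ∑ y ∈ Gd, (f y : ℤ) := by
    refine (Finset.sum_subset (Finset.subset_univ Gd) ?_).symm
    intro y _ hy
    rw [h0 y (by simpa [hGddef, Finset.mem_filter] using hy), Nat.cast_zero]
  have hstep2 : ∑ y ∈ Gd, (f y : ℤ) = ∑ y ∈ S, (f y : ℤ) + ∑ y ∈ Gd \ S, (f y : ℤ) := by
    rw [← Finset.sum_sdiff hSsub]
    ring
  have hb1 : ∑ y ∈ S, (f y : ℤ) ≤ S.card * X := by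
    calc ∑ y ∈ S, (f y : ℤ) ≤ ∑ _y ∈ S, X := by
          refine Finset.sum_le_sum fun y hy => h1 y ?_
          simp only [hSdef, Finset.mem_filter] at hy
          exact hy.2.1
      _ = S.card * X := by rw [Finset.sum_const, nsmul_eq_mul]
  have hb2 : ∑ y ∈ Gd \ S, (f y : ℤ) ≤ ((Gd.card : ℤ) - S.card) * Yv := by
    calc ∑ y ∈ Gd \ S, (f y : ℤ) ≤ ∑ _y ∈ Gd \ S, Yv := by
          refine Finset.sum_le_sum fun y hy => ?_
          rw [Finset.mem_sdiff] at hy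
          have hgood : good y := by
            have := hy.1
            simp only [hGddef, Finset.mem_filter] at this
            exact this.2
          have hnb : ¬ bad y := fun hb => hy.2 (by
            simp only [hSdef, Finset.mem_filter]
            exact ⟨Finset.mem_univ y, hgood, hb⟩)
          exact h2 y hgood hnb
      _ = ((Gd \ S).card : ℤ) * Yv := by rw [Finset.sum_const, nsmul_eq_mul]
      _ = ((Gd.card : ℤ) - S.card) * Yv := by
          rw [Finset.card_sdiff_of_subset hSsub, Nat.cast_sub (Finset.card_le_card hSsub)]
  have htot : (∑ y : Y, (f y : ℤ)) ≤ S.card * X + ((Gd.card : ℤ) - S.card) * Yv := by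
    rw [hstep1, hstep2]
    exact add_le_add hb1 hb2
  have hScard : S.card = Nat.card {y : Y // good y ∧ bad y} := by
    rw [Nat.card_eq_fintype_card, Fintype.card_subtype, hSdef]
  have hGcard : Gd.card = Nat.card {y : Y // good y} := by
    rw [Nat.card_eq_fintype_card, Fintype.card_subtype, hGddef]
  have hS' : (S.card : ℤ) ≤ SB := by rw [hScard]; exact hS
  have hG' : (Gd.card : ℤ) = GB := by rw [hGcard]; exact hG
  have hfin : (S.card : ℤ) * (X - Yv) ≤ SB * (X - Yv) := mul_le_mul_of_nonneg_right hS' hXY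
  have hGY : (Gd.card : ℤ) * Yv = GB * Yv := by rw [hG']
  nlinarith [htot, hfin, hGY]


lemma key (q n d : ℕ) (Fq : Type) [Field Fq] [Fintype Fq]
    (A B : ℤ) (hqB : 0 ≤ ((q : ℤ) - 1) * B)
    (hVA : (Nat.card {v : Fin (n + 1) → Fq | v ≠ 0} : ℤ) = ((q : ℤ) - 1) * A)
    (hserre : ∀ G : MvPolynomial (Fin (n + 1)) (AlgebraicClosure Fq), G ≠ 0 →
      (∀ mon ∈ G.support, (∑ j : Fin (n + 1), mon j) = d) →
      (Nat.card {x : Fin (n + 1) → Fq | x ≠ 0 ∧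
          MvPolynomial.eval (fun j => algebraMap Fq (AlgebraicClosure Fq) (x j)) G = 0} : ℤ)
        ≤ ((q : ℤ) - 1) * (A - B)) :
    ∀ (m : ℕ) (F : MvPolynomial (Fin m × Fin (n + 1)) (AlgebraicClosure Fq)), F ≠ 0 →
      (∀ mon ∈ F.support, ∀ i : Fin m, (∑ j : Fin (n + 1), mon (i, j)) = d) →
      (Nat.card {x : Fin m → Fin (n + 1) → Fq | (∀ i, x i ≠ 0) ∧
          MvPolynomial.eval
            (fun v => algebraMap Fq (AlgebraicClosure Fq) (x v.1 v.2)) F = 0} : ℤ)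
        ≤ ((q : ℤ) - 1) ^ m * (A ^ m - B ^ m) := by
  intro m
  induction m with
  | zero =>
      intro F hF _
      obtain ⟨a, rfl⟩ := MvPolynomial.C_surjective (Fin 0 × Fin (n + 1)) F
      have ha : a ≠ 0 := fun h => hF (by rw [h, map_zero])
      have hset : {x : Fin 0 → Fin (n + 1) → Fq | (∀ i, x i ≠ 0) ∧
          MvPolynomial.eval
            (fun v : Fin 0 × Fin (n + 1) =>
              algebraMap Fq (AlgebraicClosure Fq) (x v.1 v.2)) (C a) = 0} = ∅ := by
        ext x
        simp [eval_C, ha]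
      rw [hset]
      norm_num
  | succ m ih =>
      intro F hF hhom
      classical
      set F' := sumAlgEquiv (AlgebraicClosure Fq) (Fin (n + 1)) (Fin m × Fin (n + 1))
        (MvPolynomial.rename (grpSplit m n) F) with hF'def
      have hren : MvPolynomial.rename (grpSplit m n) F ≠ 0 := by
        intro h
        exact hF (MvPolynomial.rename_injective (grpSplit m n) (grpSplit m n).injective
          (by rw [h, map_zero]))
      have hF' : F' ≠ 0 := by
        intro h
        apply hren
        apply (sumAlgEquiv (AlgebraicClosure Fq) (Fin (n + 1)) (Fin m × Fin (n + 1))).injective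
        rw [← hF'def, h, map_zero]
      have hcoeff : ∀ (e : Fin (n + 1) →₀ ℕ) (w : (Fin m × Fin (n + 1)) →₀ ℕ),
          MvPolynomial.coeff w (MvPolynomial.coeff e F') =
            MvPolynomial.coeff
              (Finsupp.equivMapDomain (grpSplit m n).symm (e.sumElim w)) F := by
        intro e w
        rw [hF'def, coeff_coeff_sumAlgEquiv]
        have h2 : Finsupp.mapDomain (grpSplit m n)
            (Finsupp.equivMapDomain (grpSplit m n).symm (e.sumElim w)) = e.sumElim w := by
          rw [← Finsupp.equivMapDomain_eq_mapDomain]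
          ext s
          simp [Finsupp.equivMapDomain_apply]
        conv_lhs => rw [← h2]
        rw [MvPolynomial.coeff_rename_mapDomain _ (grpSplit m n).injective]
      have hμval : ∀ (e : Fin (n + 1) →₀ ℕ) (w : (Fin m × Fin (n + 1)) →₀ ℕ)
          (v : Fin (m + 1) × Fin (n + 1)),
          Finsupp.equivMapDomain (grpSplit m n).symm (e.sumElim w) v
            = (e.sumElim w) (grpSplit m n v) := by
        intro e w v
        rw [Finsupp.equivMapDomain_apply, Equiv.symm_symm]
      have hwmem : ∀ (e : Fin (n + 1) →₀ ℕ) (w : (Fin m × Fin (n + 1)) →₀ ℕ),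
          w ∈ (MvPolynomial.coeff e F').support →
          (Finsupp.equivMapDomain (grpSplit m n).symm (e.sumElim w)) ∈ F.support := by
        intro e w hw
        rw [MvPolynomial.mem_support_iff] at hw ⊢
        rw [← hcoeff e w]
        exact hw
      have hchom : ∀ (e : Fin (n + 1) →₀ ℕ) (w : (Fin m × Fin (n + 1)) →₀ ℕ),
          w ∈ (MvPolynomial.coeff e F').support → ∀ i : Fin m,
          (∑ j : Fin (n + 1), w (i, j)) = d := by
        intro e w hw i
        have h1 := hhom _ (hwmem e w hw) i.castSucc
        rw [← h1]
        refine Finset.sum_congr rfl fun j _ => ?_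
        rw [hμval, grpSplit_castSucc, Finsupp.sumElim_inr]
      have hdeg : ∀ e ∈ F'.support, (∑ j : Fin (n + 1), e j) = d := by
        intro e he
        rw [MvPolynomial.mem_support_iff] at he
        obtain ⟨w, hw⟩ := (MvPolynomial.support_nonempty.2 he)
        have h1 := hhom _ (hwmem e w hw) (Fin.last m)
        rw [← h1]
        refine Finset.sum_congr rfl fun j _ => ?_
        rw [hμval, grpSplit_last, Finsupp.sumElim_inl]
      obtain ⟨e₀, he₀⟩ := MvPolynomial.support_nonempty.2 hF'
      have hc : MvPolynomial.coeff e₀ F' ≠ 0 := MvPolynomial.mem_support_iff.1 he₀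
      have hSb := ih (MvPolynomial.coeff e₀ F') hc (fun mon hmon i => hchom e₀ mon hmon i)
      have hevalid : ∀ (y : Fin m → Fin (n + 1) → Fq) (z : Fin (n + 1) → Fq),
          MvPolynomial.eval (fun v : Fin (m + 1) × Fin (n + 1) =>
              algebraMap Fq (AlgebraicClosure Fq)
                ((Fin.snoc y z : Fin (m + 1) → Fin (n + 1) → Fq) v.1 v.2)) F
            = MvPolynomial.eval (fun j => algebraMap Fq (AlgebraicClosure Fq) (z j))
                (MvPolynomial.map (MvPolynomial.eval (fun v : Fin m × Fin (n + 1) =>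
                  algebraMap Fq (AlgebraicClosure Fq) (y v.1 v.2))) F') := by
        intro y z
        rw [hF'def, eval_sumAlgEquiv, MvPolynomial.eval_rename]
        have harg : ((Sum.elim (fun j => algebraMap Fq (AlgebraicClosure Fq) (z j))
            (fun v : Fin m × Fin (n + 1) =>
              algebraMap Fq (AlgebraicClosure Fq) (y v.1 v.2))) ∘ ⇑(grpSplit m n))
            = fun v : Fin (m + 1) × Fin (n + 1) =>
              algebraMap Fq (AlgebraicClosure Fq)
                ((Fin.snoc y z : Fin (m + 1) → Fin (n + 1) → Fq) v.1 v.2) := by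
          funext v
          obtain ⟨i, j⟩ := v
          induction i using Fin.lastCases with
          | last => simp [Function.comp, grpSplit_last, Fin.snoc_last]
          | cast i => simp [Function.comp, grpSplit_castSucc, Fin.snoc_castSucc]
        rw [harg]
      rw [card_split (fun x : Fin (m + 1) → Fin (n + 1) → Fq => (∀ i, x i ≠ 0) ∧
        MvPolynomial.eval
          (fun v => algebraMap Fq (AlgebraicClosure Fq) (x v.1 v.2)) F = 0)]
      push_cast
      have h1 : ∀ y : Fin m → Fin (n + 1) → Fq, (∀ i, y i ≠ 0) →
          ((Nat.card {z : Fin (n + 1) → Fq |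
            (∀ i, (Fin.snoc y z : Fin (m + 1) → Fin (n + 1) → Fq) i ≠ 0) ∧
            MvPolynomial.eval (fun v => algebraMap Fq (AlgebraicClosure Fq)
              ((Fin.snoc y z : Fin (m + 1) → Fin (n + 1) → Fq) v.1 v.2)) F = 0} : ℕ) : ℤ)
            ≤ ((q : ℤ) - 1) * A := by
        intro y _
        rw [← hVA, Nat.cast_le]
        refine Nat.card_mono (Set.toFinite _) ?_
        intro z hz
        simp only [Set.mem_setOf_eq] at hz ⊢
        have := hz.1 (Fin.last m)
        rwa [Fin.snoc_last] at this
      have h0 : ∀ y : Fin m → Fin (n + 1) → Fq, ¬ (∀ i, y i ≠ 0) →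
          Nat.card {z : Fin (n + 1) → Fq |
            (∀ i, (Fin.snoc y z : Fin (m + 1) → Fin (n + 1) → Fq) i ≠ 0) ∧
            MvPolynomial.eval (fun v => algebraMap Fq (AlgebraicClosure Fq)
              ((Fin.snoc y z : Fin (m + 1) → Fin (n + 1) → Fq) v.1 v.2)) F = 0} = 0 := by
        intro y hy
        push_neg at hy
        obtain ⟨i0, hi0⟩ := hy
        have hempty : {z : Fin (n + 1) → Fq |
            (∀ i, (Fin.snoc y z : Fin (m + 1) → Fin (n + 1) → Fq) i ≠ 0) ∧
            MvPolynomial.eval (fun v => algebraMap Fq (AlgebraicClosure Fq)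
              ((Fin.snoc y z : Fin (m + 1) → Fin (n + 1) → Fq) v.1 v.2)) F = 0}
            = (∅ : Set (Fin (n + 1) → Fq)) := by
          rw [Set.eq_empty_iff_forall_notMem]
          intro z hz
          simp only [Set.mem_setOf_eq] at hz
          have := hz.1 i0.castSucc
          rw [Fin.snoc_castSucc] at this
          exact this hi0
        rw [hempty]
        simp
      have h2 : ∀ y : Fin m → Fin (n + 1) → Fq, (∀ i, y i ≠ 0) →
          ¬ (MvPolynomial.eval (fun v => algebraMap Fq (AlgebraicClosure Fq) (y v.1 v.2))
              (MvPolynomial.coeff e₀ F') = 0) →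
          ((Nat.card {z : Fin (n + 1) → Fq |
            (∀ i, (Fin.snoc y z : Fin (m + 1) → Fin (n + 1) → Fq) i ≠ 0) ∧
            MvPolynomial.eval (fun v => algebraMap Fq (AlgebraicClosure Fq)
              ((Fin.snoc y z : Fin (m + 1) → Fin (n + 1) → Fq) v.1 v.2)) F = 0} : ℕ) : ℤ)
            ≤ ((q : ℤ) - 1) * (A - B) := by
        intro y hy hcy
        have hGy0 : MvPolynomial.map (MvPolynomial.eval (fun v : Fin m × Fin (n + 1) =>
            algebraMap Fq (AlgebraicClosure Fq) (y v.1 v.2))) F' ≠ 0 := by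
          intro h
          apply hcy
          have hcm := MvPolynomial.coeff_map (MvPolynomial.eval
            (fun v : Fin m × Fin (n + 1) => algebraMap Fq (AlgebraicClosure Fq) (y v.1 v.2)))
            F' e₀
          rw [h] at hcm
          simpa using hcm.symm
        have hGyhom : ∀ mon ∈ (MvPolynomial.map (MvPolynomial.eval
            (fun v : Fin m × Fin (n + 1) => algebraMap Fq (AlgebraicClosure Fq) (y v.1 v.2)))
            F').support, (∑ j : Fin (n + 1), mon j) = d :=
          fun mon hm => hdeg mon (MvPolynomial.support_map_subset _ _ hm)
        have hbound := hserre _ hGy0 hGyhom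
        have hseteq : {z : Fin (n + 1) → Fq |
            (∀ i, (Fin.snoc y z : Fin (m + 1) → Fin (n + 1) → Fq) i ≠ 0) ∧
            MvPolynomial.eval (fun v => algebraMap Fq (AlgebraicClosure Fq)
              ((Fin.snoc y z : Fin (m + 1) → Fin (n + 1) → Fq) v.1 v.2)) F = 0}
            = {x : Fin (n + 1) → Fq | x ≠ 0 ∧
              MvPolynomial.eval (fun j => algebraMap Fq (AlgebraicClosure Fq) (x j))
                (MvPolynomial.map (MvPolynomial.eval (fun v : Fin m × Fin (n + 1) =>
                  algebraMap Fq (AlgebraicClosure Fq) (y v.1 v.2))) F') = 0} := by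
          ext z
          simp only [Set.mem_setOf_eq]
          rw [hevalid y z]
          constructor
          · rintro ⟨ha, hb⟩
            refine ⟨?_, hb⟩
            have := ha (Fin.last m)
            rwa [Fin.snoc_last] at this
          · rintro ⟨ha, hb⟩
            refine ⟨?_, hb⟩
            intro i
            induction i using Fin.lastCases with
            | last => rwa [Fin.snoc_last]
            | cast i => rw [Fin.snoc_castSucc]; exact hy i
        rw [hseteq]
        exact hbound
      have hS : ((Nat.card {y : Fin m → Fin (n + 1) → Fq // (∀ i, y i ≠ 0) ∧
          MvPolynomial.eval (fun v => algebraMap Fq (AlgebraicClosure Fq)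
            (y v.1 v.2)) (MvPolynomial.coeff e₀ F') = 0} : ℕ) : ℤ)
          ≤ ((q : ℤ) - 1) ^ m * (A ^ m - B ^ m) := hSb
      have hG : ((Nat.card {y : Fin m → Fin (n + 1) → Fq // ∀ i, y i ≠ 0} : ℕ) : ℤ)
          = (((q : ℤ) - 1) * A) ^ m := by
        have e1 : {y : Fin m → Fin (n + 1) → Fq // ∀ i, y i ≠ 0}
            ≃ (Fin m → {v : Fin (n + 1) → Fq // v ≠ 0}) :=
          Equiv.subtypePiEquivPi (p := fun (_ : Fin m) (v : Fin (n + 1) → Fq) => v ≠ 0)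
        have hcardpow : Nat.card {y : Fin m → Fin (n + 1) → Fq // ∀ i, y i ≠ 0}
            = (Nat.card {v : Fin (n + 1) → Fq | v ≠ 0}) ^ m := by
          calc Nat.card {y : Fin m → Fin (n + 1) → Fq // ∀ i, y i ≠ 0}
              = Nat.card (Fin m → {v : Fin (n + 1) → Fq // v ≠ 0}) := Nat.card_congr e1
            _ = (Nat.card {v : Fin (n + 1) → Fq // v ≠ 0}) ^ m := by
                rw [Nat.card_eq_fintype_card, Nat.card_eq_fintype_card, Fintype.card_fun,
                  Fintype.card_fin]
            _ = (Nat.card {v : Fin (n + 1) → Fq | v ≠ 0}) ^ m := rfl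
        rw [hcardpow, Nat.cast_pow, hVA]
      refine le_trans (sum_count_bound _ _ _ (((q : ℤ) - 1) * A) (((q : ℤ) - 1) * (A - B))
        (((q : ℤ) - 1) ^ m * (A ^ m - B ^ m)) ((((q : ℤ) - 1) * A) ^ m)
        (by nlinarith [hqB]) h1 h0 h2 hS hG) (le_of_eq (by rw [mul_pow]; ring))

end MultihomAux

/-- Assuming Serre's bound (`a degree-d hypersurface in ℙⁿ has at most d q^{n-1} + p_{n-2}`
`𝔽_q`-points`), a multihomogeneous hypersurface in `(ℙⁿ)^m` of multidegree `(d,…,d)` has at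
most `p_n^m - (q^n - (d-1)q^{n-1})^m` points over `𝔽_q`. Projective points are counted via
nonzero vector representatives: each projective point has exactly `q - 1` representatives,
so each tuple of projective points has exactly `(q-1)^m` representative tuples. -/
theorem multihomogeneous_hypersurface_serre_bound
    (q n m d : ℕ) (hq : IsPrimePow q) (hn : 1 ≤ n) (hm : 1 ≤ m) (hd : 2 ≤ d) (hqd : d < q)
    (Fq : Type) [Field Fq] [Fintype Fq] (hcard : Fintype.card Fq = q)
    (P : ℤ → ℤ) (hP : ∀ k : ℕ, P k = ∑ i ∈ Finset.range (k + 1), (q : ℤ) ^ i)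
    (hPneg : ∀ z : ℤ, z < 0 → P z = 0)
    -- Serre's bound, as a hypothesis:
    (hSerre : ∀ G : MvPolynomial (Fin (n + 1)) (AlgebraicClosure Fq), G ≠ 0 →
      (∀ mon ∈ G.support, (∑ j : Fin (n + 1), mon j) = d) →
      (Nat.card {x : Fin (n + 1) → Fq | x ≠ 0 ∧
          MvPolynomial.eval (fun j => algebraMap Fq (AlgebraicClosure Fq) (x j)) G = 0} : ℤ)
        ≤ ((q : ℤ) - 1) * ((d : ℤ) * (q : ℤ) ^ (n - 1) + P ((n : ℤ) - 2)))
    (F : MvPolynomial (Fin m × Fin (n + 1)) (AlgebraicClosure Fq)) (hF : F ≠ 0)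
    (hhom : ∀ mon ∈ F.support, ∀ i : Fin m, (∑ j : Fin (n + 1), mon (i, j)) = d) :
    (Nat.card {x : Fin m → Fin (n + 1) → Fq | (∀ i, x i ≠ 0) ∧
        MvPolynomial.eval
          (fun v => algebraMap Fq (AlgebraicClosure Fq) (x v.1 v.2)) F = 0} : ℤ)
      ≤ ((q : ℤ) - 1) ^ m *
          ((P n) ^ m - ((q : ℤ) ^ n - ((d : ℤ) - 1) * (q : ℤ) ^ (n - 1)) ^ m) := by
  classical
  obtain ⟨k, rfl⟩ : ∃ k, n = k + 1 := ⟨n - 1, by omega⟩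
  have hdq : (d : ℤ) < (q : ℤ) := by exact_mod_cast hqd
  have hd2 : (2 : ℤ) ≤ (d : ℤ) := by exact_mod_cast hd
  have hqk : (0 : ℤ) ≤ (q : ℤ) ^ k := by positivity
  have hq1 : (1 : ℤ) ≤ (q : ℤ) := by linarith
  have hB : (0 : ℤ) ≤ (q : ℤ) ^ (k + 1) - ((d : ℤ) - 1) * (q : ℤ) ^ (k + 1 - 1) := by
    simp only [Nat.add_sub_cancel]
    rw [pow_succ]
    nlinarith
  have hqB : (0 : ℤ) ≤ ((q : ℤ) - 1) *
      ((q : ℤ) ^ (k + 1) - ((d : ℤ) - 1) * (q : ℤ) ^ (k + 1 - 1)) :=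
    mul_nonneg (by linarith) hB
  -- the number of nonzero vectors
  have hcV : Nat.card {v : Fin (k + 1 + 1) → Fq | v ≠ 0} = q ^ (k + 2) - 1 := by
    have h1 : Fintype.card {v : Fin (k + 1 + 1) → Fq // ¬ (v = 0)}
        = Fintype.card (Fin (k + 1 + 1) → Fq)
          - Fintype.card {v : Fin (k + 1 + 1) → Fq // v = 0} :=
      Fintype.card_subtype_compl _
    have h2 : Fintype.card {v : Fin (k + 1 + 1) → Fq // v = 0} = 1 :=
      Fintype.card_subtype_eq (0 : Fin (k + 1 + 1) → Fq)
    have h3 : Fintype.card (Fin (k + 1 + 1) → Fq) = q ^ (k + 2) := by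
      rw [Fintype.card_fun, Fintype.card_fin, hcard]
    rw [Nat.card_eq_fintype_card]
    calc Fintype.card {v : Fin (k + 1 + 1) → Fq // v ≠ 0}
        = Fintype.card {v : Fin (k + 1 + 1) → Fq // ¬ (v = 0)} := rfl
      _ = q ^ (k + 2) - 1 := by rw [h1, h2, h3]
  have hqpow1 : 1 ≤ q ^ (k + 2) := Nat.one_le_pow _ _ (by omega)
  have hVA : (Nat.card {v : Fin (k + 1 + 1) → Fq | v ≠ 0} : ℤ)
      = ((q : ℤ) - 1) * P ((k + 1 : ℕ) : ℤ) := by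
    rw [hcV, hP (k + 1), Nat.cast_sub hqpow1]
    push_cast
    have := geom_sum_mul ((q : ℤ)) (k + 2)
    have hrw : ((k : ℤ) + 1 + 1) = ((k + 2 : ℕ) : ℤ) := by push_cast; ring
    rw [mul_comm]
    calc ((q : ℤ)) ^ (k + 2) - 1
        = (∑ i ∈ Finset.range (k + 2), (q : ℤ) ^ i) * ((q : ℤ) - 1) := this.symm
      _ = (∑ i ∈ Finset.range (k + 1 + 1), (q : ℤ) ^ i) * ((q : ℤ) - 1) := rfl
  have hserre' : ∀ G : MvPolynomial (Fin (k + 1 + 1)) (AlgebraicClosure Fq), G ≠ 0 →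
      (∀ mon ∈ G.support, (∑ j : Fin (k + 1 + 1), mon j) = d) →
      (Nat.card {x : Fin (k + 1 + 1) → Fq | x ≠ 0 ∧
          MvPolynomial.eval (fun j => algebraMap Fq (AlgebraicClosure Fq) (x j)) G = 0} : ℤ)
        ≤ ((q : ℤ) - 1) * (P ((k + 1 : ℕ) : ℤ)
            - ((q : ℤ) ^ (k + 1) - ((d : ℤ) - 1) * (q : ℤ) ^ (k + 1 - 1))) := by
    intro G hG hGdeg
    refine le_trans (hSerre G hG hGdeg) (le_of_eq ?_)
    congr 1
    simp only [Nat.add_sub_cancel]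
    cases k with
    | zero =>
        rw [hPneg (((0 + 1 : ℕ) : ℤ) - 2) (by norm_num), hP 1]
        simp [Finset.sum_range_succ]
        ring
    | succ k' =>
        have h2 : ((k' + 1 + 1 : ℕ) : ℤ) - 2 = ((k' : ℕ) : ℤ) := by push_cast; ring
        rw [h2, hP k', hP (k' + 1 + 1)]
        rw [Finset.sum_range_succ (n := k' + 1 + 1), Finset.sum_range_succ (n := k' + 1)]
        ring
  exact MultihomAux.key q (k + 1) d Fq (P ((k + 1 : ℕ) : ℤ))
    ((q : ℤ) ^ (k + 1) - ((d : ℤ) - 1) * (q : ℤ) ^ (k + 1 - 1)) hqB hVA hserre' m F hF hhom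
end

section
/- Let $d \ge 2$, $1 \le s \le d/2$, and for $d-s+1 \le r \le d$ set $D(s,d,r) := \sum_{j=d-r+1}^{s}(j-1)$ and $\delta(s,d,r) := \prod_{j=d-r+1}^{s} j$. Then $\sum_{r=d-s+1}^{d} \frac{D(s,d,r)^3 \delta(s,d,r)^2}{r!} \le 10\, d^{7}\, 2^{-d}\, e^{2\sqrt{d}}$. -/
private lemma two_pow_sub_mul_factorial_le {a b : ℕ} (ha : 1 ≤ a) (hab : a ≤ b) :
    2 ^ (b - a) * a.factorial ≤ b.factorial := by
  induction b with
  | zero => omega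
  | succ b ih =>
    rcases Nat.lt_or_ge a (b + 1) with h | h
    · have hab' : a ≤ b := by omega
      have h1 : b + 1 - a = (b - a) + 1 := by omega
      calc 2 ^ (b + 1 - a) * a.factorial = 2 * (2 ^ (b - a) * a.factorial) := by
            rw [h1]; ring
        _ ≤ 2 * b.factorial := Nat.mul_le_mul_left 2 (ih hab')
        _ ≤ (b + 1) * b.factorial := Nat.mul_le_mul_right _ (by omega)
        _ = (b + 1).factorial := rfl
    · have : a = b + 1 := by omega
      subst this
      simp

private lemma factorial_le_pow_mul {d k : ℕ} (hk : k ≤ d) :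
    d.factorial ≤ d ^ k * (d - k).factorial := by
  induction k with
  | zero => simp
  | succ k ih =>
    have hk' : k ≤ d := by omega
    have h1 : d - k = (d - (k + 1)) + 1 := by omega
    calc d.factorial ≤ d ^ k * (d - k).factorial := ih hk'
      _ = d ^ k * ((d - k) * (d - (k + 1)).factorial) := by rw [h1]; rfl
      _ ≤ d ^ k * (d * (d - (k + 1)).factorial) :=
          Nat.mul_le_mul_left _ (Nat.mul_le_mul_right _ (by omega))
      _ = d ^ (k + 1) * (d - (k + 1)).factorial := by ring

private lemma key_nat {d s : ℕ} (hs : 1 ≤ s) (hsd : 2 * s ≤ d) :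
    2 ^ d * (s.factorial) ^ 2 ≤ d * d.factorial := by
  have h1 : 4 ^ s ≤ 2 * s * Nat.centralBinom s :=
    Nat.four_pow_le_two_mul_self_mul_centralBinom s hs
  have h2 : Nat.centralBinom s * s.factorial * s.factorial = (2 * s).factorial := by
    have := Nat.choose_mul_factorial_mul_factorial (show s ≤ 2 * s by omega)
    simpa [Nat.centralBinom, two_mul, show 2 * s - s = s by omega] using this
  have h3 : 2 ^ (d - 2 * s) * (2 * s).factorial ≤ d.factorial :=
    two_pow_sub_mul_factorial_le (by omega) hsd
  have h4 : (2:ℕ) ^ d = 2 ^ (d - 2 * s) * 4 ^ s := by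
    rw [show (4:ℕ) ^ s = (2 ^ 2) ^ s by norm_num, ← pow_mul, ← pow_add]
    congr 1
    omega
  calc 2 ^ d * s.factorial ^ 2 = 2 ^ (d - 2 * s) * (4 ^ s * s.factorial ^ 2) := by
        rw [h4]; ring
    _ ≤ 2 ^ (d - 2 * s) * (2 * s * Nat.centralBinom s * s.factorial ^ 2) :=
        Nat.mul_le_mul_left _ (Nat.mul_le_mul_right _ h1)
    _ = 2 * s * (2 ^ (d - 2 * s) * (2 * s).factorial) := by rw [← h2]; ring
    _ ≤ 2 * s * d.factorial := Nat.mul_le_mul_left _ h3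
    _ ≤ d * d.factorial := Nat.mul_le_mul_right _ (by omega)

/-- Arithmetic estimate from Corollary 8.8:
`∑_{r=d-s+1}^d D(s,d,r)³ δ(s,d,r)² / r! ≤ 10 d⁷ 2^{-d} e^{2√d}`, where
`D(s,d,r) = ∑_{j=d-r+1}^s (j-1)` and `δ(s,d,r) = ∏_{j=d-r+1}^s j`. -/
theorem average_value_set_tail_bound
    (d s : ℕ) (hd : 2 ≤ d) (hs : 1 ≤ s) (hsd : 2 * s ≤ d) :
    ∑ r ∈ Finset.Icc (d - s + 1) d,
        (((∑ j ∈ Finset.Icc (d - r + 1) s, (j - 1) : ℕ) ^ 3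
          * ((∏ j ∈ Finset.Icc (d - r + 1) s, j : ℕ)) ^ 2 : ℕ) : ℝ) / r.factorial
      ≤ 10 * (d : ℝ) ^ 7 * (2 : ℝ) ^ (-(d : ℤ)) * Real.exp (2 * Real.sqrt d) := by
  have hd0 : (0:ℝ) < d := by positivity
  have h2d : (2:ℝ) ^ (-(d:ℤ)) = ((2:ℝ) ^ d)⁻¹ := by
    rw [zpow_neg, zpow_natCast]
  set C : ℝ := (d:ℝ) ^ 7 * ((2:ℝ) ^ d)⁻¹ / 64 with hC
  have hCnonneg : 0 ≤ C := by positivity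
  -- per-term bound
  have key : ∀ r ∈ Finset.Icc (d - s + 1) d,
      (((∑ j ∈ Finset.Icc (d - r + 1) s, (j - 1) : ℕ) ^ 3
          * ((∏ j ∈ Finset.Icc (d - r + 1) s, j : ℕ)) ^ 2 : ℕ) : ℝ) / r.factorial
        ≤ C * ((d:ℝ) ^ (d - r) / ((d - r).factorial : ℝ) ^ 2) := by
    intro r hr
    rw [Finset.mem_Icc] at hr
    obtain ⟨hr1, hr2⟩ := hr
    set k := d - r with hk
    have hks : k < s := by omega
    have hkd : k ≤ d := by omega
    have hdk : d - k = r := by omega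
    -- D bound
    have hD : (∑ j ∈ Finset.Icc (d - r + 1) s, (j - 1)) ≤ s * s := by
      calc (∑ j ∈ Finset.Icc (d - r + 1) s, (j - 1))
          ≤ ∑ j ∈ Finset.Icc (d - r + 1) s, s := by
            refine Finset.sum_le_sum fun j hj => ?_
            rw [Finset.mem_Icc] at hj
            omega
        _ = (Finset.Icc (d - r + 1) s).card * s := by
            rw [Finset.sum_const, smul_eq_mul]
        _ ≤ s * s := by
            refine Nat.mul_le_mul_right _ ?_
            rw [Nat.card_Icc]
            omega
    -- δ fact
    have hδ : (∏ j ∈ Finset.Icc (d - r + 1) s, j) * k.factorial = s.factorial := by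
      rw [mul_comm]
      have h1 : d - r + 1 = k + 1 := by omega
      rw [h1, Finset.Icc_add_one_left_eq_Ioc]
      have h2 : ∏ j ∈ Finset.Ioc 0 k, j = k.factorial := by
        rw [← Finset.Icc_add_one_left_eq_Ioc, ← Finset.Ico_add_one_right_eq_Icc]
        exact Finset.prod_Ico_id_eq_factorial k
      have h3 : ∏ j ∈ Finset.Ioc 0 s, j = s.factorial := by
        rw [← Finset.Icc_add_one_left_eq_Ioc, ← Finset.Ico_add_one_right_eq_Icc]
        exact Finset.prod_Ico_id_eq_factorial s
      rw [← h2, ← h3]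
      exact Finset.prod_Ioc_consecutive _ (Nat.zero_le k) hks.le
    -- main nat inequality
    have hN : 2 ^ d * (s.factorial) ^ 2 ≤ d * (d ^ k * r.factorial) := by
      calc 2 ^ d * (s.factorial) ^ 2 ≤ d * d.factorial := key_nat hs hsd
        _ ≤ d * (d ^ k * (d - k).factorial) :=
            Nat.mul_le_mul_left _ (factorial_le_pow_mul hkd)
        _ = d * (d ^ k * r.factorial) := by rw [hdk]
    -- real arithmetic
    have hFk : (0:ℝ) < (k.factorial : ℝ) := by positivity
    have hFr : (0:ℝ) < (r.factorial : ℝ) := by positivity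
    have h2pos : (0:ℝ) < (2:ℝ) ^ d := by positivity
    have hB : ((∏ j ∈ Finset.Icc (d - r + 1) s, j : ℕ) : ℝ)
        = (s.factorial : ℝ) / (k.factorial : ℝ) := by
      rw [eq_div_iff hFk.ne']
      exact_mod_cast hδ
    have hNR : (2:ℝ) ^ d * ((s.factorial : ℝ)) ^ 2
        ≤ (d:ℝ) * ((d:ℝ) ^ k * (r.factorial : ℝ)) := by exact_mod_cast hN
    have hsfact : ((s.factorial : ℝ)) ^ 2
        ≤ (d:ℝ) * (d:ℝ) ^ k * (r.factorial : ℝ) * ((2:ℝ) ^ d)⁻¹ := by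
      calc ((s.factorial : ℝ)) ^ 2
          = ((2:ℝ) ^ d * (s.factorial : ℝ) ^ 2) * ((2:ℝ) ^ d)⁻¹ := by
            field_simp
        _ ≤ ((d:ℝ) * ((d:ℝ) ^ k * (r.factorial : ℝ))) * ((2:ℝ) ^ d)⁻¹ := by gcongr
        _ = (d:ℝ) * (d:ℝ) ^ k * (r.factorial : ℝ) * ((2:ℝ) ^ d)⁻¹ := by ring
    have hsd' : (s:ℝ) ≤ (d:ℝ) / 2 := by
      have : (2:ℝ) * s ≤ d := by exact_mod_cast hsd
      linarith
    have hs6 : (s:ℝ) ^ 6 ≤ (d:ℝ) ^ 6 / 64 := by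
      calc (s:ℝ) ^ 6 ≤ ((d:ℝ) / 2) ^ 6 := by
            exact pow_le_pow_left₀ (by positivity) hsd' 6
        _ = (d:ℝ) ^ 6 / 64 := by ring
    have hDr : ((∑ j ∈ Finset.Icc (d - r + 1) s, (j - 1) : ℕ) : ℝ) ≤ (s:ℝ) ^ 2 := by
      have : ((∑ j ∈ Finset.Icc (d - r + 1) s, (j - 1) : ℕ) : ℝ) ≤ ((s * s : ℕ) : ℝ) := by
        exact_mod_cast hD
      simpa [sq] using this
    rw [Nat.cast_mul, Nat.cast_pow, Nat.cast_pow, hB]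
    calc ((∑ j ∈ Finset.Icc (d - r + 1) s, (j - 1) : ℕ) : ℝ) ^ 3
            * ((s.factorial : ℝ) / (k.factorial : ℝ)) ^ 2 / (r.factorial : ℝ)
        ≤ ((s:ℝ) ^ 2) ^ 3 * ((s.factorial : ℝ) / (k.factorial : ℝ)) ^ 2
            / (r.factorial : ℝ) := by
          gcongr
      _ = (s:ℝ) ^ 6 * (s.factorial : ℝ) ^ 2 / ((k.factorial : ℝ) ^ 2 * (r.factorial : ℝ)) := by
          field_simp
      _ ≤ ((d:ℝ) ^ 6 / 64) * ((d:ℝ) * (d:ℝ) ^ k * (r.factorial : ℝ) * ((2:ℝ) ^ d)⁻¹)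
            / ((k.factorial : ℝ) ^ 2 * (r.factorial : ℝ)) := by
          gcongr
      _ = C * ((d:ℝ) ^ k / ((k.factorial : ℝ)) ^ 2) := by
          rw [hC]
          field_simp
      _ = C * ((d:ℝ) ^ (d - r) / ((d - r).factorial : ℝ) ^ 2) := by rw [← hk]
  calc ∑ r ∈ Finset.Icc (d - s + 1) d,
        (((∑ j ∈ Finset.Icc (d - r + 1) s, (j - 1) : ℕ) ^ 3
          * ((∏ j ∈ Finset.Icc (d - r + 1) s, j : ℕ)) ^ 2 : ℕ) : ℝ) / r.factorial
      ≤ ∑ r ∈ Finset.Icc (d - s + 1) d,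
          C * ((d:ℝ) ^ (d - r) / ((d - r).factorial : ℝ) ^ 2) :=
        Finset.sum_le_sum key
    _ = C * ∑ r ∈ Finset.Icc (d - s + 1) d,
          ((d:ℝ) ^ (d - r) / ((d - r).factorial : ℝ) ^ 2) := by
        rw [Finset.mul_sum]
    _ = C * ∑ k ∈ Finset.range s, ((d:ℝ) ^ k / ((k.factorial : ℝ)) ^ 2) := by
        congr 1
        refine Finset.sum_nbij' (fun r => d - r) (fun k => d - k) ?_ ?_ ?_ ?_ ?_
        · intro r hr; rw [Finset.mem_Icc] at hr; rw [Finset.mem_range]; omega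
        · intro k hk; rw [Finset.mem_range] at hk; rw [Finset.mem_Icc]; omega
        · intro r hr; rw [Finset.mem_Icc] at hr; omega
        · intro k hk; rw [Finset.mem_range] at hk; omega
        · intro r hr; rfl
    _ ≤ C * Real.exp (2 * Real.sqrt d) := by
        refine mul_le_mul_of_nonneg_left ?_ hCnonneg
        have hsq : ∀ k : ℕ, (d:ℝ) ^ k / ((k.factorial : ℝ)) ^ 2
            = ((Real.sqrt d) ^ k / (k.factorial : ℝ)) ^ 2 := by
          intro k
          rw [div_pow, ← pow_mul, pow_mul', Real.sq_sqrt hd0.le]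
        calc ∑ k ∈ Finset.range s, ((d:ℝ) ^ k / ((k.factorial : ℝ)) ^ 2)
            = ∑ k ∈ Finset.range s, ((Real.sqrt d) ^ k / (k.factorial : ℝ)) ^ 2 :=
              Finset.sum_congr rfl fun k _ => hsq k
          _ ≤ (∑ k ∈ Finset.range s, (Real.sqrt d) ^ k / (k.factorial : ℝ)) ^ 2 :=
              Finset.sum_sq_le_sq_sum_of_nonneg fun k _ => by positivity
          _ ≤ (Real.exp (Real.sqrt d)) ^ 2 := by
              exact pow_le_pow_left₀ (Finset.sum_nonneg fun k _ => by positivity)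
                (Real.sum_le_exp_of_nonneg (Real.sqrt_nonneg d) s) 2
          _ = Real.exp (2 * Real.sqrt d) := by
              rw [sq, ← Real.exp_add, two_mul]
    _ ≤ 10 * (d : ℝ) ^ 7 * (2 : ℝ) ^ (-(d : ℤ)) * Real.exp (2 * Real.sqrt d) := by
        rw [h2d, hC]
        have hexp : 0 < Real.exp (2 * Real.sqrt d) := Real.exp_pos _
        have h1 : (0:ℝ) < ((2:ℝ) ^ d)⁻¹ := by positivity
        nlinarith [mul_pos (mul_pos (pow_pos hd0 7) h1) hexp]
end
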